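/- arXiv:1507.07943 — 3 statements merged into one kernel-verified Lean document; each statement's English description precedes it below -/
import Mathlib

section
/- For every positive odd integer n, Q_5(n−1) = Q_11(n), where Q_5(n) counts partitions of n into distinct parts congruent to ±1, ±5, ±7, ±9 (mod 24) and Q_11(n) counts partitions of n into distinct parts congruent to ±1, ±7, ±9, ±11 (mod 24). -/
noncomputable def countRes (δ : ℕ) (S : Finset (ZMod δ)) (n : ℕ) : ℕ :=
  Nat.card {p : n.Partition // p.parts.Nodup ∧ ∀ x ∈ p.parts, (x : ZMod δ) ∈ S}

noncomputable def Q5 (n : ℕ) : ℕ :=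
  countRes 24 ({1, 5, 7, 9, 15, 17, 19, 23} : Finset (ZMod 24)) n

noncomputable def Q11 (n : ℕ) : ℕ :=
  countRes 24 ({1, 7, 9, 11, 13, 15, 17, 23} : Finset (ZMod 24)) n

abbrev Pr := Finset ℕ × Finset ℕ
def chg (d : Pr) : ℤ := (d.1.card : ℤ) - d.2.card
def wt (d : Pr) : ℕ := d.1.sum id + d.2.sum id + d.2.card
def sFun (d : Pr) : Pr :=
  (d.1.image (· + 1) ∪ (if 0 ∈ d.2 then ∅ else {0}), (d.2.erase 0).image (· - 1))
def tFun (d : Pr) : Pr :=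
  ((d.1.erase 0).image (· - 1), d.2.image (· + 1) ∪ (if 0 ∈ d.1 then ∅ else {0}))

lemma mem_sFun_fst {d : Pr} {m : ℕ} :
    m ∈ (sFun d).1 ↔ (0 < m ∧ m - 1 ∈ d.1) ∨ (m = 0 ∧ 0 ∉ d.2) := by
  simp only [sFun, Finset.mem_union, Finset.mem_image]
  constructor
  · rintro (⟨x, hx, rfl⟩ | h)
    · exact Or.inl ⟨Nat.succ_pos x, by simpa using hx⟩
    · split_ifs at h with h0
      · simp at h
      · simp at h; exact Or.inr ⟨h, h0⟩
  · rintro (⟨hm, hx⟩ | ⟨rfl, h0⟩)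
    · exact Or.inl ⟨m - 1, hx, by omega⟩
    · simp [h0]

lemma mem_sFun_snd {d : Pr} {m : ℕ} :
    m ∈ (sFun d).2 ↔ m + 1 ∈ d.2 := by
  simp only [sFun, Finset.mem_image, Finset.mem_erase]
  constructor
  · rintro ⟨x, ⟨hx0, hx⟩, rfl⟩
    have : x - 1 + 1 = x := by omega
    rwa [this]
  · intro h; exact ⟨m + 1, ⟨by omega, h⟩, by omega⟩

lemma mem_tFun_fst {d : Pr} {m : ℕ} :
    m ∈ (tFun d).1 ↔ m + 1 ∈ d.1 := by
  simp only [tFun, Finset.mem_image, Finset.mem_erase]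
  constructor
  · rintro ⟨x, ⟨hx0, hx⟩, rfl⟩
    have : x - 1 + 1 = x := by omega
    rwa [this]
  · intro h; exact ⟨m + 1, ⟨by omega, h⟩, by omega⟩

lemma mem_tFun_snd {d : Pr} {m : ℕ} :
    m ∈ (tFun d).2 ↔ (0 < m ∧ m - 1 ∈ d.2) ∨ (m = 0 ∧ 0 ∉ d.1) := by
  simp only [tFun, Finset.mem_union, Finset.mem_image]
  constructor
  · rintro (⟨x, hx, rfl⟩ | h)
    · exact Or.inl ⟨Nat.succ_pos x, by simpa using hx⟩
    · split_ifs at h with h0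
      · simp at h
      · simp at h; exact Or.inr ⟨h, h0⟩
  · rintro (⟨hm, hx⟩ | ⟨rfl, h0⟩)
    · exact Or.inl ⟨m - 1, hx, by omega⟩
    · simp [h0]

lemma tFun_sFun (d : Pr) : tFun (sFun d) = d := by
  ext m
  · rw [mem_tFun_fst, mem_sFun_fst]; simp
  · rw [mem_tFun_snd]
    constructor
    · rintro (⟨hm, hx⟩ | ⟨rfl, h0⟩)
      · rw [mem_sFun_snd] at hx
        have : m - 1 + 1 = m := by omega
        rwa [this] at hx
      · by_contra h
        exact h0 (mem_sFun_fst.2 (Or.inr ⟨rfl, h⟩))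
    · intro hm
      rcases Nat.eq_zero_or_pos m with rfl | hpos
      · by_cases h1 : 0 ∈ (sFun d).1
        · rw [mem_sFun_fst] at h1
          rcases h1 with ⟨h, _⟩ | ⟨_, h⟩
          · omega
          · exact absurd hm h
        · exact Or.inr ⟨rfl, h1⟩
      · exact Or.inl ⟨hpos, mem_sFun_snd.2 (by rwa [Nat.sub_add_cancel hpos])⟩

lemma sFun_tFun (d : Pr) : sFun (tFun d) = d := by
  ext m
  · rw [mem_sFun_fst]
    constructor
    · rintro (⟨hm, hx⟩ | ⟨rfl, h0⟩)
      · rw [mem_tFun_fst] at hx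
        have : m - 1 + 1 = m := by omega
        rwa [this] at hx
      · by_contra h
        exact h0 (mem_tFun_snd.2 (Or.inr ⟨rfl, h⟩))
    · intro hm
      rcases Nat.eq_zero_or_pos m with rfl | hpos
      · by_cases h1 : 0 ∈ (tFun d).2
        · rw [mem_tFun_snd] at h1
          rcases h1 with ⟨h, _⟩ | ⟨_, h⟩
          · omega
          · exact absurd hm h
        · exact Or.inr ⟨rfl, h1⟩
      · exact Or.inl ⟨hpos, mem_tFun_fst.2 (by rwa [Nat.sub_add_cancel hpos])⟩
  · rw [mem_sFun_snd, mem_tFun_snd]; simp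

def sigmaE : Equiv.Perm Pr := ⟨sFun, tFun, tFun_sFun, sFun_tFun⟩

lemma card_sFun_fst (d : Pr) :
    (sFun d).1.card = d.1.card + (if 0 ∈ d.2 then 0 else 1) := by
  by_cases h : 0 ∈ d.2 <;>
    simp [sFun, h, Finset.card_union_of_disjoint,
      Finset.card_image_of_injective _ (add_left_injective 1)]

lemma erase_injOn (Y : Finset ℕ) : Set.InjOn (· - 1) (Y.erase 0 : Finset ℕ) := by
  intro x hx y hy hxy
  simp only [Finset.coe_erase, Set.mem_diff, Finset.mem_coe, Set.mem_singleton_iff] at hx hy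
  simp only at hxy
  omega

lemma card_sFun_snd (d : Pr) :
    (sFun d).2.card = d.2.card - (if 0 ∈ d.2 then 1 else 0) := by
  have : (sFun d).2.card = (d.2.erase 0).card :=
    Finset.card_image_of_injOn (erase_injOn d.2)
  rw [this]
  by_cases h : 0 ∈ d.2 <;> simp [Finset.card_erase_of_mem, Finset.erase_eq_of_notMem, h]

lemma sum_sFun_fst (d : Pr) :
    (((sFun d).1.sum id : ℕ) : ℤ) = (d.1.sum id : ℕ) + d.1.card := by
  have hdisj : Disjoint (d.1.image (· + 1)) (if 0 ∈ d.2 then (∅ : Finset ℕ) else {0}) := by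
    split_ifs <;> simp
  have : (sFun d).1.sum id = (d.1.image (· + 1)).sum id +
      (if 0 ∈ d.2 then (∅ : Finset ℕ) else {0}).sum id := Finset.sum_union hdisj
  rw [this]
  have h2 : (d.1.image (· + 1)).sum id = d.1.sum (· + 1) :=
    Finset.sum_image (fun x _ y _ h => by omega)
  have h3 : (if 0 ∈ d.2 then (∅ : Finset ℕ) else {0}).sum id = 0 := by
    split_ifs <;> simp
  rw [h2, h3, Finset.sum_add_distrib]
  push_cast
  simp [mul_comm]

lemma sum_sFun_snd (d : Pr) :
    (((sFun d).2.sum id : ℕ) : ℤ) =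
      (d.2.sum id : ℕ) - d.2.card + (if 0 ∈ d.2 then 1 else 0) := by
  have h2 : (sFun d).2.sum id = (d.2.erase 0).sum (· - 1) :=
    Finset.sum_image (erase_injOn d.2)
  rw [h2, Nat.cast_sum]
  have h3 : ∀ y ∈ d.2.erase 0, ((y - 1 : ℕ) : ℤ) = (y : ℤ) - 1 := by
    intro y hy
    have := Finset.ne_of_mem_erase hy
    omega
  rw [Finset.sum_congr rfl h3, Finset.sum_sub_distrib]
  have hcast : ((d.2.sum id : ℕ) : ℤ) = ∑ x ∈ d.2, (x : ℤ) := by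
    rw [Nat.cast_sum]; rfl
  by_cases h : 0 ∈ d.2
  · rw [Finset.sum_erase d.2 (f := fun x : ℕ => (x : ℤ)) (by simp)]
    have hc : 1 ≤ d.2.card := Finset.card_pos.2 ⟨0, h⟩
    have h4 : ∑ _x ∈ d.2.erase 0, (1 : ℤ) = (d.2.card : ℤ) - 1 := by
      rw [Finset.sum_const, Finset.card_erase_of_mem h, nsmul_eq_mul, mul_one,
        Nat.cast_sub hc, Nat.cast_one]
    rw [h4]
    simp only [h, if_true, hcast]
    ring
  · rw [Finset.erase_eq_of_notMem h]
    simp only [h, if_false, Finset.sum_const, nsmul_eq_mul, mul_one, hcast]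
    ring

lemma chg_sFun (d : Pr) : chg (sFun d) = chg d + 1 := by
  unfold chg
  rw [card_sFun_fst, card_sFun_snd]
  by_cases h : 0 ∈ d.2
  · have hc : 1 ≤ d.2.card := Finset.card_pos.2 ⟨0, h⟩
    simp [h]; push_cast [Nat.cast_sub hc]; ring
  · simp [h]; ring

lemma wt_sFun (d : Pr) : ((wt (sFun d) : ℕ) : ℤ) = wt d + chg d := by
  have h1 := sum_sFun_fst d
  have h2 := sum_sFun_snd d
  have h3 := card_sFun_snd d
  unfold wt chg
  rw [Nat.cast_add, Nat.cast_add, Nat.cast_add, Nat.cast_add, h1, h2, h3]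
  by_cases h : 0 ∈ d.2
  · have hc : 1 ≤ d.2.card := Finset.card_pos.2 ⟨0, h⟩
    simp only [h, if_true]
    rw [Nat.cast_sub hc]
    push_cast
    ring
  · simp only [h, if_false, Nat.sub_zero]
    push_cast
    ring

lemma chg_tFun (d : Pr) : chg (tFun d) = chg d - 1 := by
  have := chg_sFun (tFun d)
  rw [sFun_tFun] at this
  omega

lemma wt_tFun (d : Pr) : ((wt (tFun d) : ℕ) : ℤ) = wt d - chg d + 1 := by
  have h1 := wt_sFun (tFun d)
  have h2 := chg_tFun d
  rw [sFun_tFun] at h1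
  rw [h2] at h1
  omega

lemma sigmaE_apply (d : Pr) : sigmaE d = sFun d := rfl

lemma sigmaE_inv_apply (d : Pr) : sigmaE⁻¹ d = tFun d := rfl

lemma chg_zpow (k : ℤ) : ∀ d : Pr, chg ((sigmaE ^ k) d) = chg d + k := by
  induction k using Int.induction_on with
  | zero => simp
  | succ n ih =>
      intro d
      rw [zpow_add_one, Equiv.Perm.mul_apply, ih, sigmaE_apply, chg_sFun]
      ring
  | pred n ih =>
      intro d
      rw [zpow_sub_one, Equiv.Perm.mul_apply, ih, sigmaE_inv_apply, chg_tFun]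
      ring

lemma wt_zpow (k : ℤ) : ∀ d : Pr,
    2 * ((wt ((sigmaE ^ k) d) : ℕ) : ℤ) = 2 * wt d + 2 * k * chg d + k * (k - 1) := by
  induction k using Int.induction_on with
  | zero => intro d; simp
  | succ n ih =>
      intro d
      rw [zpow_add_one, Equiv.Perm.mul_apply, ih, sigmaE_apply, wt_sFun, chg_sFun]
      ring
  | pred n ih =>
      intro d
      rw [zpow_sub_one, Equiv.Perm.mul_apply, ih, sigmaE_inv_apply, wt_tFun, chg_tFun]
      ring

def dec (r : ℕ) (d : Pr) : Finset ℕ :=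
  d.1.image (fun x => 24 * x + r) ∪ d.2.image (fun y => 24 * y + (24 - r))

lemma mem_dec {r : ℕ} (hr0 : 0 < r) (hr : r < 12) {d : Pr} {m : ℕ} :
    m ∈ dec r d ↔ (m % 24 = r ∧ m / 24 ∈ d.1) ∨ (m % 24 = 24 - r ∧ m / 24 ∈ d.2) := by
  simp only [dec, Finset.mem_union, Finset.mem_image]
  constructor
  · rintro (⟨x, hx, rfl⟩ | ⟨y, hy, rfl⟩)
    · refine Or.inl ⟨by omega, ?_⟩
      have : (24 * x + r) / 24 = x := by omega
      rwa [this]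
    · refine Or.inr ⟨by omega, ?_⟩
      have : (24 * y + (24 - r)) / 24 = y := by omega
      rwa [this]
  · rintro (⟨h1, h2⟩ | ⟨h1, h2⟩)
    · exact Or.inl ⟨m / 24, h2, by omega⟩
    · exact Or.inr ⟨m / 24, h2, by omega⟩

lemma sum_dec {r : ℕ} (hr0 : 0 < r) (hr : r < 12) (d : Pr) :
    (((dec r d).sum id : ℕ) : ℤ) = 24 * wt d + r * chg d := by
  have hdisj : Disjoint (d.1.image (fun x => 24 * x + r))
      (d.2.image (fun y => 24 * y + (24 - r))) := by
    rw [Finset.disjoint_left]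
    rintro a ha hb
    simp only [Finset.mem_image] at ha hb
    obtain ⟨x, _, hx⟩ := ha
    obtain ⟨y, _, hy⟩ := hb
    omega
  have h1 : (d.1.image (fun x => 24 * x + r)).sum id = d.1.sum (fun x => 24 * x + r) :=
    Finset.sum_image (fun x _ y _ h => by omega)
  have h2 : (d.2.image (fun y => 24 * y + (24 - r))).sum id
      = d.2.sum (fun y => 24 * y + (24 - r)) :=
    Finset.sum_image (fun x _ y _ h => by omega)
  rw [dec, Finset.sum_union hdisj, h1, h2]
  unfold wt chg
  have hc : ((24 - r : ℕ) : ℤ) = 24 - r := by omega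
  push_cast [Finset.sum_add_distrib, hc]
  simp only [nsmul_eq_mul, id_eq]
  rw [show (∑ x ∈ d.1, (24 * (x:ℤ))) = 24 * ∑ x ∈ d.1, (x:ℤ) from (Finset.mul_sum _ _ _).symm,
    show (∑ x ∈ d.2, (24 * (x:ℤ))) = 24 * ∑ x ∈ d.2, (x:ℤ) from (Finset.mul_sum _ _ _).symm]
  simp only [Finset.sum_sub_distrib, Finset.sum_const, nsmul_eq_mul]
  ring

abbrev Dd := Pr × Pr × Pr × Pr

def decode5 (d : Dd) : Finset ℕ :=
  dec 1 d.1 ∪ dec 5 d.2.1 ∪ dec 7 d.2.2.1 ∪ dec 9 d.2.2.2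

def decode11 (d : Dd) : Finset ℕ :=
  dec 1 d.1 ∪ dec 7 d.2.1 ∪ dec 9 d.2.2.1 ∪ dec 11 d.2.2.2

def val5 (d : Dd) : ℤ :=
  24 * ((wt d.1 : ℤ) + wt d.2.1 + wt d.2.2.1 + wt d.2.2.2) +
    chg d.1 + 5 * chg d.2.1 + 7 * chg d.2.2.1 + 9 * chg d.2.2.2

def val11 (d : Dd) : ℤ :=
  24 * ((wt d.1 : ℤ) + wt d.2.1 + wt d.2.2.1 + wt d.2.2.2) +
    chg d.1 + 7 * chg d.2.1 + 9 * chg d.2.2.1 + 11 * chg d.2.2.2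

lemma mem_decode5 {d : Dd} {m : ℕ} :
    m ∈ decode5 d ↔ (((m % 24 = 1 ∧ m / 24 ∈ d.1.1) ∨ (m % 24 = 23 ∧ m / 24 ∈ d.1.2)) ∨
      ((m % 24 = 5 ∧ m / 24 ∈ d.2.1.1) ∨ (m % 24 = 19 ∧ m / 24 ∈ d.2.1.2))) ∨
      (((m % 24 = 7 ∧ m / 24 ∈ d.2.2.1.1) ∨ (m % 24 = 17 ∧ m / 24 ∈ d.2.2.1.2)) ∨
      ((m % 24 = 9 ∧ m / 24 ∈ d.2.2.2.1) ∨ (m % 24 = 15 ∧ m / 24 ∈ d.2.2.2.2))) := by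
  have e1 := mem_dec (r := 1) (by norm_num) (by norm_num) (d := d.1) (m := m)
  have e5 := mem_dec (r := 5) (by norm_num) (by norm_num) (d := d.2.1) (m := m)
  have e7 := mem_dec (r := 7) (by norm_num) (by norm_num) (d := d.2.2.1) (m := m)
  have e9 := mem_dec (r := 9) (by norm_num) (by norm_num) (d := d.2.2.2) (m := m)
  norm_num at e1 e5 e7 e9
  rw [decode5, Finset.union_assoc, Finset.mem_union, Finset.mem_union, Finset.mem_union,
    e1, e5, e7, e9]

lemma mem_decode11 {d : Dd} {m : ℕ} :
    m ∈ decode11 d ↔ (((m % 24 = 1 ∧ m / 24 ∈ d.1.1) ∨ (m % 24 = 23 ∧ m / 24 ∈ d.1.2)) ∨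
      ((m % 24 = 7 ∧ m / 24 ∈ d.2.1.1) ∨ (m % 24 = 17 ∧ m / 24 ∈ d.2.1.2))) ∨
      (((m % 24 = 9 ∧ m / 24 ∈ d.2.2.1.1) ∨ (m % 24 = 15 ∧ m / 24 ∈ d.2.2.1.2)) ∨
      ((m % 24 = 11 ∧ m / 24 ∈ d.2.2.2.1) ∨ (m % 24 = 13 ∧ m / 24 ∈ d.2.2.2.2))) := by
  have e1 := mem_dec (r := 1) (by norm_num) (by norm_num) (d := d.1) (m := m)
  have e7 := mem_dec (r := 7) (by norm_num) (by norm_num) (d := d.2.1) (m := m)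
  have e9 := mem_dec (r := 9) (by norm_num) (by norm_num) (d := d.2.2.1) (m := m)
  have e11 := mem_dec (r := 11) (by norm_num) (by norm_num) (d := d.2.2.2) (m := m)
  norm_num at e1 e7 e9 e11
  rw [decode11, Finset.union_assoc, Finset.mem_union, Finset.mem_union, Finset.mem_union,
    e1, e7, e9, e11]

lemma dec_disjoint {r s : ℕ} (hr0 : 0 < r) (hr : r < 12) (hs0 : 0 < s) (hs : s < 12)
    (h : r ≠ s) (d e : Pr) : Disjoint (dec r d) (dec s e) := by
  rw [Finset.disjoint_left]
  intro a ha hb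
  rw [mem_dec hr0 hr] at ha
  rw [mem_dec hs0 hs] at hb
  omega

lemma sum_decode5 (d : Dd) : (((decode5 d).sum id : ℕ) : ℤ) = val5 d := by
  have h15 := dec_disjoint (by norm_num) (by norm_num) (by norm_num) (by norm_num)
    (by norm_num : (1:ℕ) ≠ 5) d.1 d.2.1
  have h7 : Disjoint (dec 1 d.1 ∪ dec 5 d.2.1) (dec 7 d.2.2.1) := by
    rw [Finset.disjoint_union_left]
    exact ⟨dec_disjoint (by norm_num) (by norm_num) (by norm_num) (by norm_num)
      (by norm_num) _ _, dec_disjoint (by norm_num) (by norm_num) (by norm_num)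
      (by norm_num) (by norm_num) _ _⟩
  have h9 : Disjoint (dec 1 d.1 ∪ dec 5 d.2.1 ∪ dec 7 d.2.2.1) (dec 9 d.2.2.2) := by
    rw [Finset.disjoint_union_left, Finset.disjoint_union_left]
    exact ⟨⟨dec_disjoint (by norm_num) (by norm_num) (by norm_num) (by norm_num)
      (by norm_num) _ _, dec_disjoint (by norm_num) (by norm_num) (by norm_num)
      (by norm_num) (by norm_num) _ _⟩, dec_disjoint (by norm_num) (by norm_num)
      (by norm_num) (by norm_num) (by norm_num) _ _⟩
  rw [decode5, Finset.sum_union h9, Finset.sum_union h7, Finset.sum_union h15]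
  rw [Nat.cast_add, Nat.cast_add, Nat.cast_add]
  rw [sum_dec (by norm_num) (by norm_num), sum_dec (by norm_num) (by norm_num),
    sum_dec (by norm_num) (by norm_num), sum_dec (by norm_num) (by norm_num)]
  unfold val5
  push_cast
  ring

lemma sum_decode11 (d : Dd) : (((decode11 d).sum id : ℕ) : ℤ) = val11 d := by
  have h15 := dec_disjoint (by norm_num) (by norm_num) (by norm_num) (by norm_num)
    (by norm_num : (1:ℕ) ≠ 7) d.1 d.2.1
  have h7 : Disjoint (dec 1 d.1 ∪ dec 7 d.2.1) (dec 9 d.2.2.1) := by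
    rw [Finset.disjoint_union_left]
    exact ⟨dec_disjoint (by norm_num) (by norm_num) (by norm_num) (by norm_num)
      (by norm_num) _ _, dec_disjoint (by norm_num) (by norm_num) (by norm_num)
      (by norm_num) (by norm_num) _ _⟩
  have h9 : Disjoint (dec 1 d.1 ∪ dec 7 d.2.1 ∪ dec 9 d.2.2.1) (dec 11 d.2.2.2) := by
    rw [Finset.disjoint_union_left, Finset.disjoint_union_left]
    exact ⟨⟨dec_disjoint (by norm_num) (by norm_num) (by norm_num) (by norm_num)
      (by norm_num) _ _, dec_disjoint (by norm_num) (by norm_num) (by norm_num)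
      (by norm_num) (by norm_num) _ _⟩, dec_disjoint (by norm_num) (by norm_num)
      (by norm_num) (by norm_num) (by norm_num) _ _⟩
  rw [decode11, Finset.sum_union h9, Finset.sum_union h7, Finset.sum_union h15]
  rw [Nat.cast_add, Nat.cast_add, Nat.cast_add]
  rw [sum_dec (by norm_num) (by norm_num), sum_dec (by norm_num) (by norm_num),
    sum_dec (by norm_num) (by norm_num), sum_dec (by norm_num) (by norm_num)]
  unfold val11
  push_cast
  ring

def enc (r : ℕ) (s : Finset ℕ) : Pr :=
  ((s.filter (fun m => m % 24 = r)).image (· / 24),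
   (s.filter (fun m => m % 24 = 24 - r)).image (· / 24))

def encode5 (s : Finset ℕ) : Dd := (enc 1 s, enc 5 s, enc 7 s, enc 9 s)
def encode11 (s : Finset ℕ) : Dd := (enc 1 s, enc 7 s, enc 9 s, enc 11 s)

lemma enc_eq {r : ℕ} (hr0 : 0 < r) (hr : r < 12) (t : Finset ℕ) (d : Pr)
    (h1 : ∀ m, m % 24 = r → (m ∈ t ↔ m / 24 ∈ d.1))
    (h2 : ∀ m, m % 24 = 24 - r → (m ∈ t ↔ m / 24 ∈ d.2)) : enc r t = d := by
  have key : ∀ (u : ℕ) (Z : Finset ℕ), 0 < u → u < 24 →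
      (∀ m, m % 24 = u → (m ∈ t ↔ m / 24 ∈ Z)) →
      (t.filter (fun m => m % 24 = u)).image (· / 24) = Z := by
    intro u Z hu0 hu h
    ext x
    simp only [Finset.mem_image, Finset.mem_filter]
    constructor
    · rintro ⟨m, ⟨hm, hmod⟩, rfl⟩
      exact (h m hmod).1 hm
    · intro hx
      refine ⟨24 * x + u, ⟨?_, by omega⟩, by omega⟩
      have hd : (24 * x + u) / 24 = x := by omega
      exact (h _ (by omega)).2 (by rwa [hd])
  have e1 := key r d.1 hr0 (by omega) h1
  have e2 := key (24 - r) d.2 (by omega) (by omega) h2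
  unfold enc
  rw [e1, e2]

lemma encode5_decode5 (d : Dd) : encode5 (decode5 d) = d := by
  have h1 : ∀ m : ℕ, m % 24 = 1 → (m ∈ decode5 d ↔ m / 24 ∈ d.1.1) := by
    intro m hm
    rw [mem_decode5]
    constructor
    · rintro (((⟨h,hx⟩|⟨h,hx⟩)|(⟨h,hx⟩|⟨h,hx⟩))|((⟨h,hx⟩|⟨h,hx⟩)|(⟨h,hx⟩|⟨h,hx⟩))) <;>
        first | exact hx | omega
    · intro hx
      exact Or.inl (Or.inl (Or.inl ⟨hm, hx⟩)) 
  have h23 : ∀ m : ℕ, m % 24 = 23 → (m ∈ decode5 d ↔ m / 24 ∈ d.1.2) := by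
    intro m hm
    rw [mem_decode5]
    constructor
    · rintro (((⟨h,hx⟩|⟨h,hx⟩)|(⟨h,hx⟩|⟨h,hx⟩))|((⟨h,hx⟩|⟨h,hx⟩)|(⟨h,hx⟩|⟨h,hx⟩))) <;>
        first | exact hx | omega
    · intro hx
      exact Or.inl (Or.inl (Or.inr ⟨hm, hx⟩)) 
  have h5 : ∀ m : ℕ, m % 24 = 5 → (m ∈ decode5 d ↔ m / 24 ∈ d.2.1.1) := by
    intro m hm
    rw [mem_decode5]
    constructor
    · rintro (((⟨h,hx⟩|⟨h,hx⟩)|(⟨h,hx⟩|⟨h,hx⟩))|((⟨h,hx⟩|⟨h,hx⟩)|(⟨h,hx⟩|⟨h,hx⟩))) <;>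
        first | exact hx | omega
    · intro hx
      exact Or.inl (Or.inr (Or.inl ⟨hm, hx⟩)) 
  have h19 : ∀ m : ℕ, m % 24 = 19 → (m ∈ decode5 d ↔ m / 24 ∈ d.2.1.2) := by
    intro m hm
    rw [mem_decode5]
    constructor
    · rintro (((⟨h,hx⟩|⟨h,hx⟩)|(⟨h,hx⟩|⟨h,hx⟩))|((⟨h,hx⟩|⟨h,hx⟩)|(⟨h,hx⟩|⟨h,hx⟩))) <;>
        first | exact hx | omega
    · intro hx
      exact Or.inl (Or.inr (Or.inr ⟨hm, hx⟩)) 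
  have h7 : ∀ m : ℕ, m % 24 = 7 → (m ∈ decode5 d ↔ m / 24 ∈ d.2.2.1.1) := by
    intro m hm
    rw [mem_decode5]
    constructor
    · rintro (((⟨h,hx⟩|⟨h,hx⟩)|(⟨h,hx⟩|⟨h,hx⟩))|((⟨h,hx⟩|⟨h,hx⟩)|(⟨h,hx⟩|⟨h,hx⟩))) <;>
        first | exact hx | omega
    · intro hx
      exact Or.inr (Or.inl (Or.inl ⟨hm, hx⟩)) 
  have h17 : ∀ m : ℕ, m % 24 = 17 → (m ∈ decode5 d ↔ m / 24 ∈ d.2.2.1.2) := by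
    intro m hm
    rw [mem_decode5]
    constructor
    · rintro (((⟨h,hx⟩|⟨h,hx⟩)|(⟨h,hx⟩|⟨h,hx⟩))|((⟨h,hx⟩|⟨h,hx⟩)|(⟨h,hx⟩|⟨h,hx⟩))) <;>
        first | exact hx | omega
    · intro hx
      exact Or.inr (Or.inl (Or.inr ⟨hm, hx⟩)) 
  have h9 : ∀ m : ℕ, m % 24 = 9 → (m ∈ decode5 d ↔ m / 24 ∈ d.2.2.2.1) := by
    intro m hm
    rw [mem_decode5]
    constructor
    · rintro (((⟨h,hx⟩|⟨h,hx⟩)|(⟨h,hx⟩|⟨h,hx⟩))|((⟨h,hx⟩|⟨h,hx⟩)|(⟨h,hx⟩|⟨h,hx⟩))) <;>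
        first | exact hx | omega
    · intro hx
      exact Or.inr (Or.inr (Or.inl ⟨hm, hx⟩)) 
  have h15 : ∀ m : ℕ, m % 24 = 15 → (m ∈ decode5 d ↔ m / 24 ∈ d.2.2.2.2) := by
    intro m hm
    rw [mem_decode5]
    constructor
    · rintro (((⟨h,hx⟩|⟨h,hx⟩)|(⟨h,hx⟩|⟨h,hx⟩))|((⟨h,hx⟩|⟨h,hx⟩)|(⟨h,hx⟩|⟨h,hx⟩))) <;>
        first | exact hx | omega
    · intro hx
      exact Or.inr (Or.inr (Or.inr ⟨hm, hx⟩)) 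
  refine Prod.ext ?_ (Prod.ext ?_ (Prod.ext ?_ ?_))
  · exact enc_eq (by norm_num) (by norm_num) _ _ h1 h23
  · exact enc_eq (by norm_num) (by norm_num) _ _ h5 h19
  · exact enc_eq (by norm_num) (by norm_num) _ _ h7 h17
  · exact enc_eq (by norm_num) (by norm_num) _ _ h9 h15

lemma encode11_decode11 (d : Dd) : encode11 (decode11 d) = d := by
  have h1 : ∀ m : ℕ, m % 24 = 1 → (m ∈ decode11 d ↔ m / 24 ∈ d.1.1) := by
    intro m hm
    rw [mem_decode11]
    constructor
    · rintro (((⟨h,hx⟩|⟨h,hx⟩)|(⟨h,hx⟩|⟨h,hx⟩))|((⟨h,hx⟩|⟨h,hx⟩)|(⟨h,hx⟩|⟨h,hx⟩))) <;>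
        first | exact hx | omega
    · intro hx
      exact Or.inl (Or.inl (Or.inl ⟨hm, hx⟩)) 
  have h23 : ∀ m : ℕ, m % 24 = 23 → (m ∈ decode11 d ↔ m / 24 ∈ d.1.2) := by
    intro m hm
    rw [mem_decode11]
    constructor
    · rintro (((⟨h,hx⟩|⟨h,hx⟩)|(⟨h,hx⟩|⟨h,hx⟩))|((⟨h,hx⟩|⟨h,hx⟩)|(⟨h,hx⟩|⟨h,hx⟩))) <;>
        first | exact hx | omega
    · intro hx
      exact Or.inl (Or.inl (Or.inr ⟨hm, hx⟩)) 
  have h7 : ∀ m : ℕ, m % 24 = 7 → (m ∈ decode11 d ↔ m / 24 ∈ d.2.1.1) := by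
    intro m hm
    rw [mem_decode11]
    constructor
    · rintro (((⟨h,hx⟩|⟨h,hx⟩)|(⟨h,hx⟩|⟨h,hx⟩))|((⟨h,hx⟩|⟨h,hx⟩)|(⟨h,hx⟩|⟨h,hx⟩))) <;>
        first | exact hx | omega
    · intro hx
      exact Or.inl (Or.inr (Or.inl ⟨hm, hx⟩)) 
  have h17 : ∀ m : ℕ, m % 24 = 17 → (m ∈ decode11 d ↔ m / 24 ∈ d.2.1.2) := by
    intro m hm
    rw [mem_decode11]
    constructor
    · rintro (((⟨h,hx⟩|⟨h,hx⟩)|(⟨h,hx⟩|⟨h,hx⟩))|((⟨h,hx⟩|⟨h,hx⟩)|(⟨h,hx⟩|⟨h,hx⟩))) <;>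
        first | exact hx | omega
    · intro hx
      exact Or.inl (Or.inr (Or.inr ⟨hm, hx⟩)) 
  have h9 : ∀ m : ℕ, m % 24 = 9 → (m ∈ decode11 d ↔ m / 24 ∈ d.2.2.1.1) := by
    intro m hm
    rw [mem_decode11]
    constructor
    · rintro (((⟨h,hx⟩|⟨h,hx⟩)|(⟨h,hx⟩|⟨h,hx⟩))|((⟨h,hx⟩|⟨h,hx⟩)|(⟨h,hx⟩|⟨h,hx⟩))) <;>
        first | exact hx | omega
    · intro hx
      exact Or.inr (Or.inl (Or.inl ⟨hm, hx⟩)) 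
  have h15 : ∀ m : ℕ, m % 24 = 15 → (m ∈ decode11 d ↔ m / 24 ∈ d.2.2.1.2) := by
    intro m hm
    rw [mem_decode11]
    constructor
    · rintro (((⟨h,hx⟩|⟨h,hx⟩)|(⟨h,hx⟩|⟨h,hx⟩))|((⟨h,hx⟩|⟨h,hx⟩)|(⟨h,hx⟩|⟨h,hx⟩))) <;>
        first | exact hx | omega
    · intro hx
      exact Or.inr (Or.inl (Or.inr ⟨hm, hx⟩)) 
  have h11 : ∀ m : ℕ, m % 24 = 11 → (m ∈ decode11 d ↔ m / 24 ∈ d.2.2.2.1) := by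
    intro m hm
    rw [mem_decode11]
    constructor
    · rintro (((⟨h,hx⟩|⟨h,hx⟩)|(⟨h,hx⟩|⟨h,hx⟩))|((⟨h,hx⟩|⟨h,hx⟩)|(⟨h,hx⟩|⟨h,hx⟩))) <;>
        first | exact hx | omega
    · intro hx
      exact Or.inr (Or.inr (Or.inl ⟨hm, hx⟩)) 
  have h13 : ∀ m : ℕ, m % 24 = 13 → (m ∈ decode11 d ↔ m / 24 ∈ d.2.2.2.2) := by
    intro m hm
    rw [mem_decode11]
    constructor
    · rintro (((⟨h,hx⟩|⟨h,hx⟩)|(⟨h,hx⟩|⟨h,hx⟩))|((⟨h,hx⟩|⟨h,hx⟩)|(⟨h,hx⟩|⟨h,hx⟩))) <;>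
        first | exact hx | omega
    · intro hx
      exact Or.inr (Or.inr (Or.inr ⟨hm, hx⟩)) 
  refine Prod.ext ?_ (Prod.ext ?_ (Prod.ext ?_ ?_))
  · exact enc_eq (by norm_num) (by norm_num) _ _ h1 h23
  · exact enc_eq (by norm_num) (by norm_num) _ _ h7 h17
  · exact enc_eq (by norm_num) (by norm_num) _ _ h9 h15
  · exact enc_eq (by norm_num) (by norm_num) _ _ h11 h13

lemma decode5_encode5 (s : Finset ℕ)
    (hres : ∀ m ∈ s, m % 24 = 1 ∨ m % 24 = 5 ∨ m % 24 = 7 ∨ m % 24 = 9 ∨ m % 24 = 15 ∨ m % 24 = 17 ∨ m % 24 = 19 ∨ m % 24 = 23) :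
    decode5 (encode5 s) = s := by
  ext m
  rw [mem_decode5]
  simp only [encode5, enc, Finset.mem_image, Finset.mem_filter]
  constructor
  · rintro (((⟨h, m2, ⟨hm2, hmod⟩, hdiv⟩|⟨h, m2, ⟨hm2, hmod⟩, hdiv⟩)|(⟨h, m2, ⟨hm2, hmod⟩, hdiv⟩|⟨h, m2, ⟨hm2, hmod⟩, hdiv⟩))|((⟨h, m2, ⟨hm2, hmod⟩, hdiv⟩|⟨h, m2, ⟨hm2, hmod⟩, hdiv⟩)|(⟨h, m2, ⟨hm2, hmod⟩, hdiv⟩|⟨h, m2, ⟨hm2, hmod⟩, hdiv⟩))) <;>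
      · have hm2m : m2 = m := by omega
        subst hm2m
        exact hm2
  · intro hm
    rcases hres m hm with h|h|h|h|h|h|h|h
    · exact Or.inl (Or.inl (Or.inl ⟨h, m, ⟨hm, by omega⟩, rfl⟩))
    · exact Or.inl (Or.inr (Or.inl ⟨h, m, ⟨hm, by omega⟩, rfl⟩))
    · exact Or.inr (Or.inl (Or.inl ⟨h, m, ⟨hm, by omega⟩, rfl⟩))
    · exact Or.inr (Or.inr (Or.inl ⟨h, m, ⟨hm, by omega⟩, rfl⟩))
    · exact Or.inr (Or.inr (Or.inr ⟨h, m, ⟨hm, by omega⟩, rfl⟩))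
    · exact Or.inr (Or.inl (Or.inr ⟨h, m, ⟨hm, by omega⟩, rfl⟩))
    · exact Or.inl (Or.inr (Or.inr ⟨h, m, ⟨hm, by omega⟩, rfl⟩))
    · exact Or.inl (Or.inl (Or.inr ⟨h, m, ⟨hm, by omega⟩, rfl⟩))

lemma decode11_encode11 (s : Finset ℕ)
    (hres : ∀ m ∈ s, m % 24 = 1 ∨ m % 24 = 7 ∨ m % 24 = 9 ∨ m % 24 = 11 ∨ m % 24 = 13 ∨ m % 24 = 15 ∨ m % 24 = 17 ∨ m % 24 = 23) :
    decode11 (encode11 s) = s := by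
  ext m
  rw [mem_decode11]
  simp only [encode11, enc, Finset.mem_image, Finset.mem_filter]
  constructor
  · rintro (((⟨h, m2, ⟨hm2, hmod⟩, hdiv⟩|⟨h, m2, ⟨hm2, hmod⟩, hdiv⟩)|(⟨h, m2, ⟨hm2, hmod⟩, hdiv⟩|⟨h, m2, ⟨hm2, hmod⟩, hdiv⟩))|((⟨h, m2, ⟨hm2, hmod⟩, hdiv⟩|⟨h, m2, ⟨hm2, hmod⟩, hdiv⟩)|(⟨h, m2, ⟨hm2, hmod⟩, hdiv⟩|⟨h, m2, ⟨hm2, hmod⟩, hdiv⟩))) <;>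
      · have hm2m : m2 = m := by omega
        subst hm2m
        exact hm2
  · intro hm
    rcases hres m hm with h|h|h|h|h|h|h|h
    · exact Or.inl (Or.inl (Or.inl ⟨h, m, ⟨hm, by omega⟩, rfl⟩))
    · exact Or.inl (Or.inr (Or.inl ⟨h, m, ⟨hm, by omega⟩, rfl⟩))
    · exact Or.inr (Or.inl (Or.inl ⟨h, m, ⟨hm, by omega⟩, rfl⟩))
    · exact Or.inr (Or.inr (Or.inl ⟨h, m, ⟨hm, by omega⟩, rfl⟩))
    · exact Or.inr (Or.inr (Or.inr ⟨h, m, ⟨hm, by omega⟩, rfl⟩))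
    · exact Or.inr (Or.inl (Or.inr ⟨h, m, ⟨hm, by omega⟩, rfl⟩))
    · exact Or.inl (Or.inr (Or.inr ⟨h, m, ⟨hm, by omega⟩, rfl⟩))
    · exact Or.inl (Or.inl (Or.inr ⟨h, m, ⟨hm, by omega⟩, rfl⟩))

def csum (d : Dd) : ℤ := chg d.1 + chg d.2.1 + chg d.2.2.1 + chg d.2.2.2

def psiK (k : ℤ) (d : Dd) : Dd :=
  ((sigmaE ^ (1 - k - chg d.1)) d.1,
   (sigmaE ^ (chg d.1 - k)) d.2.1,
   (sigmaE ^ (chg d.1 - k)) d.2.2.1,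
   (sigmaE ^ (chg d.1 - k)) d.2.2.2)

def phiM (m : ℤ) (d : Dd) : Dd :=
  ((sigmaE ^ (m - 2 * chg d.1)) d.1,
   (sigmaE ^ (1 - m)) d.2.1,
   (sigmaE ^ (1 - m)) d.2.2.1,
   (sigmaE ^ (1 - m)) d.2.2.2)

lemma zpow_apply_zpow {u v : ℤ} (h : u + v = 0) (x : Pr) :
    (sigmaE ^ u) ((sigmaE ^ v) x) = x := by
  rw [← Equiv.Perm.mul_apply, ← zpow_add, h, zpow_zero, Equiv.Perm.one_apply]

lemma csum_psiK (k : ℤ) (d : Dd) (hk : csum d = 2 * k) :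
    csum (psiK k d) = 1 + 2 * chg d.1 - 2 * k := by
  unfold csum psiK
  rw [chg_zpow, chg_zpow, chg_zpow, chg_zpow]
  unfold csum at hk
  linarith

lemma csum_phiM (m : ℤ) (e : Dd) (hm : csum e = 2 * m - 1) :
    csum (phiM m e) = 2 - 2 * chg e.1 := by
  unfold csum phiM
  rw [chg_zpow, chg_zpow, chg_zpow, chg_zpow]
  unfold csum at hm
  linarith

lemma val11_psiK (k : ℤ) (d : Dd) (hk : csum d = 2 * k) :
    val11 (psiK k d) = val5 d + 1 := by
  have hW1 := wt_zpow (1 - k - chg d.1) d.1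
  have hW2 := wt_zpow (chg d.1 - k) d.2.1
  have hW3 := wt_zpow (chg d.1 - k) d.2.2.1
  have hW4 := wt_zpow (chg d.1 - k) d.2.2.2
  have hc1 := chg_zpow (1 - k - chg d.1) d.1
  have hc2 := chg_zpow (chg d.1 - k) d.2.1
  have hc3 := chg_zpow (chg d.1 - k) d.2.2.1
  have hc4 := chg_zpow (chg d.1 - k) d.2.2.2
  unfold csum at hk
  unfold val11 val5 psiK
  linear_combination 12 * hW1 + 12 * hW2 + 12 * hW3 + 12 * hW4 +
    hc1 + 7 * hc2 + 9 * hc3 + 11 * hc4 + (2 + 24 * chg d.1 - 24 * k) * hk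

lemma val5_phiM (m : ℤ) (e : Dd) (hm : csum e = 2 * m - 1) :
    val5 (phiM m e) = val11 e - 1 := by
  have hW1 := wt_zpow (m - 2 * chg e.1) e.1
  have hW2 := wt_zpow (1 - m) e.2.1
  have hW3 := wt_zpow (1 - m) e.2.2.1
  have hW4 := wt_zpow (1 - m) e.2.2.2
  have hc1 := chg_zpow (m - 2 * chg e.1) e.1
  have hc2 := chg_zpow (1 - m) e.2.1
  have hc3 := chg_zpow (1 - m) e.2.2.1
  have hc4 := chg_zpow (1 - m) e.2.2.2
  unfold csum at hm
  unfold val5 val11 phiM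
  linear_combination 12 * hW1 + 12 * hW2 + 12 * hW3 + 12 * hW4 +
    hc1 + 5 * hc2 + 7 * hc3 + 9 * hc4 + (22 - 24 * m) * hm

lemma phiM_psiK (k : ℤ) (d : Dd) :
    phiM (1 + chg d.1 - k) (psiK k d) = d := by
  have hc1 := chg_zpow (1 - k - chg d.1) d.1
  refine Prod.ext ?_ (Prod.ext ?_ (Prod.ext ?_ ?_))
  · show (sigmaE ^ (1 + chg d.1 - k - 2 * chg (psiK k d).1)) ((sigmaE ^ (1 - k - chg d.1)) d.1) = d.1
    have hcc : chg (psiK k d).1 = chg d.1 + (1 - k - chg d.1) := hc1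
    rw [hcc]
    exact zpow_apply_zpow (by ring) d.1
  · exact zpow_apply_zpow (by ring) d.2.1
  · exact zpow_apply_zpow (by ring) d.2.2.1
  · exact zpow_apply_zpow (by ring) d.2.2.2

lemma psiK_phiM (m : ℤ) (e : Dd) :
    psiK (1 - chg e.1) (phiM m e) = e := by
  have hc1 := chg_zpow (m - 2 * chg e.1) e.1
  refine Prod.ext ?_ (Prod.ext ?_ (Prod.ext ?_ ?_))
  · show (sigmaE ^ (1 - (1 - chg e.1) - chg (phiM m e).1)) ((sigmaE ^ (m - 2 * chg e.1)) e.1) = e.1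
    have hcc : chg (phiM m e).1 = chg e.1 + (m - 2 * chg e.1) := hc1
    rw [hcc]
    exact zpow_apply_zpow (by ring) e.1
  · show (sigmaE ^ (chg (phiM m e).1 - (1 - chg e.1))) ((sigmaE ^ (1 - m)) e.2.1) = e.2.1
    have hcc : chg (phiM m e).1 = chg e.1 + (m - 2 * chg e.1) := hc1
    rw [hcc]
    exact zpow_apply_zpow (by ring) e.2.1
  · show (sigmaE ^ (chg (phiM m e).1 - (1 - chg e.1))) ((sigmaE ^ (1 - m)) e.2.2.1) = e.2.2.1
    have hcc : chg (phiM m e).1 = chg e.1 + (m - 2 * chg e.1) := hc1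
    rw [hcc]
    exact zpow_apply_zpow (by ring) e.2.2.1
  · show (sigmaE ^ (chg (phiM m e).1 - (1 - chg e.1))) ((sigmaE ^ (1 - m)) e.2.2.2) = e.2.2.2
    have hcc : chg (phiM m e).1 = chg e.1 + (m - 2 * chg e.1) := hc1
    rw [hcc]
    exact zpow_apply_zpow (by ring) e.2.2.2

lemma val5_sub_csum_even (d : Dd) : Even (val5 d - csum d) := by
  unfold val5 csum
  exact ⟨12 * ((wt d.1 : ℤ) + wt d.2.1 + wt d.2.2.1 + wt d.2.2.2) +
    2 * chg d.2.1 + 3 * chg d.2.2.1 + 4 * chg d.2.2.2, by ring⟩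

lemma val11_sub_csum_even (d : Dd) : Even (val11 d - csum d) := by
  unfold val11 csum
  exact ⟨12 * ((wt d.1 : ℤ) + wt d.2.1 + wt d.2.2.1 + wt d.2.2.2) +
    3 * chg d.2.1 + 4 * chg d.2.2.1 + 5 * chg d.2.2.2, by ring⟩

noncomputable def mainEquiv (N : ℤ) (hN : Even N) :
    {d : Dd // val5 d = N} ≃ {d : Dd // val11 d = N + 1} where
  toFun p := ⟨psiK (csum p.1 / 2) p.1, by
    obtain ⟨d, hd⟩ := p
    have h1 := val5_sub_csum_even d
    rw [hd] at h1
    have h2 : csum d % 2 = 0 := by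
      obtain ⟨w, hw⟩ := hN
      obtain ⟨u, hu⟩ := h1
      omega
    have hk : csum d = 2 * (csum d / 2) := by omega
    rw [val11_psiK _ _ hk, hd]⟩
  invFun q := ⟨phiM ((csum q.1 + 1) / 2) q.1, by
    obtain ⟨e, he⟩ := q
    have h1 := val11_sub_csum_even e
    rw [he] at h1
    have h2 : csum e % 2 = 1 := by
      obtain ⟨w, hw⟩ := hN
      obtain ⟨u, hu⟩ := h1
      omega
    have hm : csum e = 2 * ((csum e + 1) / 2) - 1 := by omega
    rw [val5_phiM _ _ hm, he]
    ring⟩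
  left_inv p := by
    obtain ⟨d, hd⟩ := p
    apply Subtype.ext
    show phiM _ (psiK (csum d / 2) d) = d
    have h1 := val5_sub_csum_even d
    rw [hd] at h1
    have h2 : csum d % 2 = 0 := by
      obtain ⟨w, hw⟩ := hN
      obtain ⟨u, hu⟩ := h1
      omega
    have hk : csum d = 2 * (csum d / 2) := by omega
    have hcs := csum_psiK (csum d / 2) d hk
    rw [hcs]
    have : (1 + 2 * chg d.1 - 2 * (csum d / 2) + 1) / 2 = 1 + chg d.1 - csum d / 2 := by
      omega
    rw [this]
    exact phiM_psiK _ d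
  right_inv q := by
    obtain ⟨e, he⟩ := q
    apply Subtype.ext
    show psiK _ (phiM ((csum e + 1) / 2) e) = e
    have h1 := val11_sub_csum_even e
    rw [he] at h1
    have h2 : csum e % 2 = 1 := by
      obtain ⟨w, hw⟩ := hN
      obtain ⟨u, hu⟩ := h1
      omega
    have hm : csum e = 2 * ((csum e + 1) / 2) - 1 := by omega
    have hcs := csum_phiM ((csum e + 1) / 2) e hm
    rw [hcs]
    have : (2 - 2 * chg e.1) / 2 = 1 - chg e.1 := by omega
    rw [this]
    exact psiK_phiM _ e

lemma zmod_mem5 (x : ℕ) :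
    ((x : ZMod 24) ∈ ({1, 5, 7, 9, 15, 17, 19, 23} : Finset (ZMod 24))) ↔
      (x % 24 = 1 ∨ x % 24 = 5 ∨ x % 24 = 7 ∨ x % 24 = 9 ∨
       x % 24 = 15 ∨ x % 24 = 17 ∨ x % 24 = 19 ∨ x % 24 = 23) := by
  have hdec : ∀ a : ZMod 24, a ∈ ({1, 5, 7, 9, 15, 17, 19, 23} : Finset (ZMod 24)) ↔
      (a.val = 1 ∨ a.val = 5 ∨ a.val = 7 ∨ a.val = 9 ∨
       a.val = 15 ∨ a.val = 17 ∨ a.val = 19 ∨ a.val = 23) := by decide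
  rw [hdec, ZMod.val_natCast]

lemma zmod_mem11 (x : ℕ) :
    ((x : ZMod 24) ∈ ({1, 7, 9, 11, 13, 15, 17, 23} : Finset (ZMod 24))) ↔
      (x % 24 = 1 ∨ x % 24 = 7 ∨ x % 24 = 9 ∨ x % 24 = 11 ∨
       x % 24 = 13 ∨ x % 24 = 15 ∨ x % 24 = 17 ∨ x % 24 = 23) := by
  have hdec : ∀ a : ZMod 24, a ∈ ({1, 7, 9, 11, 13, 15, 17, 23} : Finset (ZMod 24)) ↔
      (a.val = 1 ∨ a.val = 7 ∨ a.val = 9 ∨ a.val = 11 ∨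
       a.val = 13 ∨ a.val = 15 ∨ a.val = 17 ∨ a.val = 23) := by decide
  rw [hdec, ZMod.val_natCast]

def partEquiv (m : ℕ) (S : Finset (ZMod 24)) :
    {p : m.Partition // p.parts.Nodup ∧ ∀ x ∈ p.parts, (x : ZMod 24) ∈ S} ≃
      {s : Finset ℕ // (∀ x ∈ s, 0 < x ∧ (x : ZMod 24) ∈ S) ∧ s.sum id = m} where
  toFun p := ⟨p.1.parts.toFinset, by
    obtain ⟨p, hnd, hres⟩ := p
    have hval : p.parts.toFinset.val = p.parts := by
      rw [Multiset.toFinset_val, Multiset.dedup_eq_self.2 hnd]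
    constructor
    · intro x hx
      rw [Multiset.mem_toFinset] at hx
      exact ⟨p.parts_pos hx, hres x hx⟩
    · rw [Finset.sum_eq_multiset_sum, hval, Multiset.map_id]
      exact p.parts_sum⟩
  invFun s := ⟨⟨s.1.val, fun {x} hx => (s.2.1 x hx).1, by
      have := s.2.2
      rwa [Finset.sum_eq_multiset_sum, Multiset.map_id] at this⟩,
    s.1.nodup, fun x hx => (s.2.1 x hx).2⟩
  left_inv p := by
    obtain ⟨p, hnd, hres⟩ := p
    apply Subtype.ext
    apply Nat.Partition.ext
    simp only
    rw [Multiset.toFinset_val, Multiset.dedup_eq_self.2 hnd]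
  right_inv s := by
    apply Subtype.ext
    simp only
    exact Finset.val_toFinset s.1

def finsetEquiv5 (m : ℕ) :
    {s : Finset ℕ // (∀ x ∈ s, 0 < x ∧
        (x : ZMod 24) ∈ ({1, 5, 7, 9, 15, 17, 19, 23} : Finset (ZMod 24))) ∧ s.sum id = m} ≃
      {d : Dd // val5 d = (m : ℤ)} where
  toFun s := ⟨encode5 s.1, by
    obtain ⟨s, hs, hsum⟩ := s
    have hres : ∀ x ∈ s, x % 24 = 1 ∨ x % 24 = 5 ∨ x % 24 = 7 ∨ x % 24 = 9 ∨
        x % 24 = 15 ∨ x % 24 = 17 ∨ x % 24 = 19 ∨ x % 24 = 23 :=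
      fun x hx => (zmod_mem5 x).1 (hs x hx).2
    have h1 := sum_decode5 (encode5 s)
    rw [decode5_encode5 s hres, hsum] at h1
    exact h1.symm⟩
  invFun d := ⟨decode5 d.1, by
    obtain ⟨d, hd⟩ := d
    constructor
    · intro x hx
      rw [mem_decode5] at hx
      constructor
      · rcases hx with ((⟨h,_⟩|⟨h,_⟩)|(⟨h,_⟩|⟨h,_⟩))|((⟨h,_⟩|⟨h,_⟩)|(⟨h,_⟩|⟨h,_⟩)) <;> omega
      · rw [zmod_mem5]
        rcases hx with ((⟨h,_⟩|⟨h,_⟩)|(⟨h,_⟩|⟨h,_⟩))|((⟨h,_⟩|⟨h,_⟩)|(⟨h,_⟩|⟨h,_⟩)) <;> omega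
    · have h1 := sum_decode5 d
      rw [hd] at h1
      exact_mod_cast h1⟩
  left_inv s := by
    obtain ⟨s, hs, hsum⟩ := s
    apply Subtype.ext
    exact decode5_encode5 s (fun x hx => (zmod_mem5 x).1 (hs x hx).2)
  right_inv d := by
    apply Subtype.ext
    exact encode5_decode5 d.1

def finsetEquiv11 (m : ℕ) :
    {s : Finset ℕ // (∀ x ∈ s, 0 < x ∧
        (x : ZMod 24) ∈ ({1, 7, 9, 11, 13, 15, 17, 23} : Finset (ZMod 24))) ∧ s.sum id = m} ≃
      {d : Dd // val11 d = (m : ℤ)} where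
  toFun s := ⟨encode11 s.1, by
    obtain ⟨s, hs, hsum⟩ := s
    have hres : ∀ x ∈ s, x % 24 = 1 ∨ x % 24 = 7 ∨ x % 24 = 9 ∨ x % 24 = 11 ∨
        x % 24 = 13 ∨ x % 24 = 15 ∨ x % 24 = 17 ∨ x % 24 = 23 :=
      fun x hx => (zmod_mem11 x).1 (hs x hx).2
    have h1 := sum_decode11 (encode11 s)
    rw [decode11_encode11 s hres, hsum] at h1
    exact h1.symm⟩
  invFun d := ⟨decode11 d.1, by
    obtain ⟨d, hd⟩ := d
    constructor
    · intro x hx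
      rw [mem_decode11] at hx
      constructor
      · rcases hx with ((⟨h,_⟩|⟨h,_⟩)|(⟨h,_⟩|⟨h,_⟩))|((⟨h,_⟩|⟨h,_⟩)|(⟨h,_⟩|⟨h,_⟩)) <;> omega
      · rw [zmod_mem11]
        rcases hx with ((⟨h,_⟩|⟨h,_⟩)|(⟨h,_⟩|⟨h,_⟩))|((⟨h,_⟩|⟨h,_⟩)|(⟨h,_⟩|⟨h,_⟩)) <;> omega
    · have h1 := sum_decode11 d
      rw [hd] at h1
      exact_mod_cast h1⟩
  left_inv s := by
    obtain ⟨s, hs, hsum⟩ := s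
    apply Subtype.ext
    exact decode11_encode11 s (fun x hx => (zmod_mem11 x).1 (hs x hx).2)
  right_inv d := by
    apply Subtype.ext
    exact encode11_decode11 d.1


/-- Alladi's identity: for every positive odd integer `n`, `Q_5(n-1) = Q_11(n)`. -/
theorem Q5_shift_eq_Q11_odd (n : ℕ) (hn : 0 < n) (hodd : Odd n) :
    Q5 (n - 1) = Q11 n := by
  obtain ⟨j, hj⟩ := hodd
  have hEven : Even ((n - 1 : ℕ) : ℤ) := ⟨j, by omega⟩
  unfold Q5 Q11 countRes
  apply Nat.card_congr
  exact ((partEquiv (n-1) _).trans (finsetEquiv5 (n-1))).trans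
    (((mainEquiv _ hEven).trans (Equiv.subtypeEquivRight (fun d => by
        constructor <;> intro h <;> omega))).trans
      ((finsetEquiv11 n).symm.trans (partEquiv n _).symm))
end

section
/- For every positive integer n with n ≡ 4 (mod 6), Q_5(n−1) = Q_11(n), where Q_5 and Q_11 count partitions into distinct parts in the residue classes ±{1,5,7,9} and ±{1,7,9,11} mod 24 respectively. -/
/-
A set of distinct parts from the classes `±r (mod m)`, `0 < r < m / 2`, is a finite set
`F ⊆ ℤ`, the element `a` standing for the part `|m a + r|`; the parts sum to
`m Σ_{a ∈ F} |a| + r c(F)`, with charge `c(F) = #{a ≥ 0} - #{a < 0}`. Translating the Maya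
diagram `F ∆ ℤ_{<0}` by one raises the charge by one and `Σ |a|` by the charge, so `F` is the
`z`-th translate of a unique charge-zero set `u`, and `Σ_F |a| = Σ_u |a| + z (z - 1) / 2`:
the combinatorial Jacobi triple product.

With the classes `±1, ±7, ±9, ±11` (resp. `±5` for `±11`) mod 24, `Q_11(n)` and `Q_5(n - 1)`
thus count charge vectors `z ∈ ℤ⁴` together with charge-zero sets of total `Σ |a| = K`,
subject to `Σ_i (12 z_i² + (r_i - 12) z_i) = n - 24 K`, resp. `n - 1 - 24 K`. In the
coordinates `t_i = 24 z_i + r_i - 12` both equations read `Σ t_i² = 48 (n - 24 K) + 156`,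
because `Σ (r_i - 12)²` is 156, resp. `204 = 156 + 48`. A rational orthogonal map fixing `t_2`
carries the solutions of one onto those of the other; `n ≡ 1 (mod 3)` makes it integral.
-/

open Finset Function

namespace Maya

def charge (F : Finset ℤ) : ℤ := ∑ a ∈ F, if 0 ≤ a then 1 else -1

def absSum (F : Finset ℤ) : ℤ := ∑ a ∈ F, |a|

-- translation by one of the Maya diagram `F ∆ ℤ_{<0}`
def shift : Equiv.Perm (Finset ℤ) :=
  (Equiv.addRight 1).finsetCongr.trans ((symmDiff_left_involutive {0}).toPerm _)

lemma sum_symmDiff_singleton {α M : Type*} [DecidableEq α] [AddCommGroup M]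
    (s : Finset α) (x : α) (g : α → M) :
    ∑ a ∈ symmDiff s {x}, g a = ∑ a ∈ s, g a + if x ∈ s then -g x else g x := by
  split_ifs with hx
  · have h : symmDiff s {x} = s.erase x := by
      ext a; by_cases a = x <;> simp_all [mem_symmDiff]
    rw [h, sum_erase_eq_sub hx, sub_eq_add_neg]
  · have h : symmDiff s {x} = insert x s := by
      ext a; by_cases a = x <;> simp_all [mem_symmDiff]
    rw [h, sum_insert hx, add_comm]

lemma sum_shift {M : Type*} [AddCommGroup M] (F : Finset ℤ) (g : ℤ → M) :
    ∑ a ∈ shift F, g a = ∑ a ∈ F, g (a + 1) + if -1 ∈ F then -g 0 else g 0 := by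
  have h : (0 : ℤ) ∈ F.map (Equiv.addRight 1).toEmbedding ↔ -1 ∈ F := by simp
  simp only [shift, Equiv.trans_apply, Involutive.coe_toPerm, Equiv.finsetCongr_apply,
    sum_symmDiff_singleton, sum_map, h]
  rfl

lemma charge_shift (F : Finset ℤ) : charge (shift F) = charge F + 1 := by
  have h : ∀ a : ℤ, ((if 0 ≤ a + 1 then 1 else -1 : ℤ)) =
      (if 0 ≤ a then 1 else -1) + if a = -1 then 2 else 0 := by
    intro a; split_ifs <;> omega
  simp only [charge, sum_shift, h, sum_add_distrib, sum_ite_eq', le_refl, if_true]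
  split_ifs <;> ring

lemma absSum_shift (F : Finset ℤ) : absSum (shift F) = absSum F + charge F := by
  have h : ∀ a : ℤ, |a + 1| = |a| + if 0 ≤ a then 1 else -1 := by
    intro a
    split_ifs with ha
    · rw [abs_of_nonneg ha, abs_of_nonneg (by omega)]
    · rw [abs_of_neg (by omega : a < 0), abs_of_nonpos (by omega : a + 1 ≤ 0)]; ring
  simp only [absSum, charge, sum_shift, h, sum_add_distrib, abs_zero, neg_zero, ite_self,
    add_zero]

lemma charge_shift_zpow (z : ℤ) (F : Finset ℤ) : charge ((shift ^ z) F) = charge F + z := by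
  induction z using Int.induction_on generalizing F with
  | zero => simp
  | succ k ih => rw [zpow_add_one, Equiv.Perm.mul_apply, ih, charge_shift]; ring
  | pred k ih =>
    rw [zpow_sub_one, Equiv.Perm.mul_apply, Equiv.Perm.inv_def, ih]
    have := charge_shift (shift.symm F)
    rw [Equiv.apply_symm_apply] at this
    linarith

lemma two_mul_absSum_shift_zpow (z : ℤ) (F : Finset ℤ) :
    2 * absSum ((shift ^ z) F) = 2 * absSum F + 2 * z * charge F + z * (z - 1) := by
  induction z using Int.induction_on generalizing F with
  | zero => simp
  | succ k ih =>
    rw [zpow_add_one, Equiv.Perm.mul_apply, ih, absSum_shift, charge_shift]; ring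
  | pred k ih =>
    rw [zpow_sub_one, Equiv.Perm.mul_apply, Equiv.Perm.inv_def, ih]
    have h1 := charge_shift (shift.symm F)
    have h2 := absSum_shift (shift.symm F)
    rw [Equiv.apply_symm_apply] at h1 h2
    linear_combination -2 * h2 + (2 * k + 2) * h1

abbrev ChargeZero := {F : Finset ℤ // charge F = 0}

def chargeEquiv : Finset ℤ ≃ ℤ × ChargeZero where
  toFun F := (charge F, ⟨(shift ^ (-charge F)) F, by rw [charge_shift_zpow]; ring⟩)
  invFun p := (shift ^ p.1) p.2
  left_inv F := by
    simp only [← Equiv.Perm.mul_apply, ← zpow_add, add_neg_cancel, zpow_zero,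
      Equiv.Perm.one_apply]
  right_inv := by
    rintro ⟨z, u, hu⟩
    have hz : charge ((shift ^ z) u) = z := by rw [charge_shift_zpow, hu, zero_add]
    ext1
    · exact hz
    · ext1
      simp only [hz, ← Equiv.Perm.mul_apply, ← zpow_add, neg_add_cancel, zpow_zero,
        Equiv.Perm.one_apply]

lemma two_mul_absSum_eq (F : Finset ℤ) :
    2 * absSum F = 2 * absSum (chargeEquiv F).2 + charge F * (charge F - 1) := by
  have h := two_mul_absSum_shift_zpow (-charge F) F
  simp only [chargeEquiv, Equiv.coe_fn_mk] at h ⊢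
  linear_combination -h

end Maya

section Encoding

variable {ι α : Type*} [Fintype ι]

noncomputable def finsetEquivPi (f : ι × α → ℕ) (hf : Injective f) :
    {s : Finset ℕ // ∀ x ∈ s, x ∈ Set.range f} ≃ (ι → Finset α) where
  toFun s i := s.1.preimage (f ∘ Prod.mk i) (hf.comp (Prod.mk_right_injective i)).injOn
  invFun F := ⟨univ.biUnion fun i => (F i).image fun a => f (i, a), by
    simp only [mem_biUnion, mem_univ, true_and, mem_image]
    rintro _ ⟨i, a, -, rfl⟩
    exact ⟨(i, a), rfl⟩⟩
  left_inv s := by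
    ext x
    simp only [mem_biUnion, mem_univ, true_and, mem_image, Finset.mem_preimage, comp_apply]
    constructor
    · rintro ⟨i, a, ha, rfl⟩; exact ha
    · intro hx
      obtain ⟨⟨i, a⟩, rfl⟩ := s.2 x hx
      exact ⟨i, a, hx, rfl⟩
  right_inv F := by
    funext i
    ext a
    simp only [Finset.mem_preimage, comp_apply, mem_biUnion, mem_univ, true_and, mem_image]
    constructor
    · rintro ⟨j, b, hb, h⟩
      obtain ⟨rfl, rfl⟩ := Prod.ext_iff.mp (hf h)
      exact hb
    · intro ha; exact ⟨i, a, ha, rfl⟩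

lemma sum_finsetEquivPi_symm (f : ι × α → ℕ) (hf : Injective f) (F : ι → Finset α) :
    ∑ x ∈ ((finsetEquivPi f hf).symm F).1, x = ∑ i, ∑ a ∈ F i, f (i, a) := by
  rw [finsetEquivPi, Equiv.coe_fn_symm_mk, sum_biUnion]
  · exact sum_congr rfl fun i _ => sum_image fun a _ b _ h => (Prod.ext_iff.mp (hf h)).2
  · intro i _ j _ hij
    simp only [Function.onFun, disjoint_left, mem_image]
    rintro _ ⟨a, _, rfl⟩ ⟨b, _, h⟩
    exact hij (Prod.ext_iff.mp (hf h)).1.symm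

lemma card_finset_sum_eq_card_pi (f : ι × α → ℕ) (hf : Injective f) (P : ℕ → Prop)
    (hP : ∀ x, P x ↔ x ∈ Set.range f) (n : ℕ) :
    Nat.card {s : Finset ℕ // (∀ x ∈ s, P x) ∧ ∑ x ∈ s, x = n} =
      Nat.card {F : ι → Finset α // ∑ i, ∑ a ∈ F i, f (i, a) = n} := by
  refine Nat.card_congr (((Equiv.subtypeSubtypeEquivSubtypeInter
    (fun s : Finset ℕ => ∀ x ∈ s, x ∈ Set.range f) (fun s => ∑ x ∈ s, x = n)).trans
      (Equiv.subtypeEquivRight fun s => by simp only [hP])).symm.trans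
      ((finsetEquivPi f hf).subtypeEquiv fun s => ?_))
  rw [← sum_finsetEquivPi_symm f hf, Equiv.symm_apply_apply]

lemma card_distinct_partitions (P : ℕ → Prop) (hP : ¬ P 0) (n : ℕ) :
    Nat.card {p : n.Partition // p.parts.Nodup ∧ ∀ x ∈ p.parts, P x} =
      Nat.card {s : Finset ℕ // (∀ x ∈ s, P x) ∧ ∑ x ∈ s, x = n} :=
  Nat.card_congr
    { toFun p := ⟨⟨p.1.parts, p.2.1⟩, p.2.2, by simpa using p.1.parts_sum⟩
      invFun s := ⟨⟨s.1.1, fun hi => Nat.pos_of_ne_zero fun h => hP (h ▸ s.2.1 _ hi),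
        by simpa using s.2.2⟩, s.1.2, s.2.1⟩
      left_inv p := rfl
      right_inv s := rfl }

end Encoding

lemma exists_natAbs_mul_add_eq_iff (m r x : ℕ) :
    (∃ a : ℤ, (m * a + r).natAbs = x) ↔ (x : ZMod m) = r ∨ (x : ZMod m) = -r := by
  constructor
  · rintro ⟨a, rfl⟩
    rw [← Int.cast_natCast, Int.natCast_natAbs]
    rcases abs_choice ((m : ℤ) * a + r) with h | h <;> rw [h] <;> simp
  · rintro (h | h)
    · rw [← Int.cast_natCast, ← Int.cast_natCast (R := ZMod m) r,
        ZMod.intCast_eq_intCast_iff_dvd_sub] at h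
      obtain ⟨k, hk⟩ := h
      exact ⟨-k, by rw [show (m : ℤ) * -k + r = x by linear_combination hk, Int.natAbs_natCast]⟩
    · rw [← Int.cast_natCast, ← Int.cast_natCast (R := ZMod m) r, ← Int.cast_neg,
        ZMod.intCast_eq_intCast_iff_dvd_sub] at h
      obtain ⟨k, hk⟩ := h
      exact ⟨k, by rw [show (m : ℤ) * k + r = -x by linear_combination -hk, Int.natAbs_neg,
        Int.natAbs_natCast]⟩

lemma injective_natAbs_mul_add {ι : Type*} {m : ℕ} {r : ι → ℕ} (hr : Injective r)
    (hpos : ∀ i, 0 < r i) (hlt : ∀ i, 2 * r i < m) :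
    Injective fun p : ι × ℤ => (m * p.2 + r p.1).natAbs := by
  rintro ⟨i, a⟩ ⟨j, b⟩ h
  have hi := hpos i; have hj := hpos j; have hi' := hlt i; have hj' := hlt j
  rcases Int.natAbs_eq_natAbs_iff.mp h with h | h
  · have hdiff : (r i : ℤ) - r j = 0 := Int.eq_zero_of_abs_lt_dvd
      (show (m : ℤ) ∣ r i - r j from ⟨b - a, by linear_combination h⟩) (by rw [abs_lt]; omega)
    obtain rfl : i = j := hr (by omega)
    have hm : (m : ℤ) ≠ 0 := by omega
    simpa using mul_left_cancel₀ hm (by linarith : (m : ℤ) * a = m * b)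
  · have hsum : (r i : ℤ) + r j = 0 := Int.eq_zero_of_abs_lt_dvd
      (show (m : ℤ) ∣ r i + r j from ⟨-a - b, by linear_combination h⟩) (by rw [abs_lt]; omega)
    omega

lemma natAbs_mul_add_ne_zero {m r : ℕ} (hpos : 0 < r) (hlt : r < m) (a : ℤ) :
    (m * a + r).natAbs ≠ 0 := by
  intro h
  have : (r : ℤ) = 0 := Int.eq_zero_of_abs_lt_dvd
    (show (m : ℤ) ∣ r from ⟨-a, by linear_combination Int.natAbs_eq_zero.mp h⟩)
    (by rw [abs_lt]; omega)
  omega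

lemma sum_natAbs_mul_add {m r : ℕ} (hr : r ≤ m) (F : Finset ℤ) :
    ((∑ a ∈ F, (m * a + r).natAbs : ℕ) : ℤ) = m * Maya.absSum F + r * Maya.charge F := by
  push_cast [Int.natCast_natAbs]
  rw [Maya.absSum, Maya.charge, mul_sum, mul_sum, ← sum_add_distrib]
  refine sum_congr rfl fun a _ => ?_
  split_ifs with ha
  · rw [abs_of_nonneg ha, abs_of_nonneg (by positivity)]; ring
  · have : (m : ℤ) * a ≤ -m := by nlinarith
    rw [abs_of_neg (by omega : a < 0), abs_of_nonpos (by omega)]; ring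

lemma two_mul_sum_natAbs_mul_add {m r : ℕ} (hr : r ≤ m) (F : Finset ℤ) :
    2 * ((∑ a ∈ F, (m * a + r).natAbs : ℕ) : ℤ) =
      m * (Maya.charge F * (Maya.charge F - 1)) + 2 * r * Maya.charge F
        + 2 * m * Maya.absSum (Maya.chargeEquiv F).2 := by
  rw [sum_natAbs_mul_add hr]
  linear_combination m * Maya.two_mul_absSum_eq F

-- twice `Σ_i (m z_i (z_i - 1) / 2 + r_i z_i)`, to stay clear of the division
def chargeWeight {ι : Type*} [Fintype ι] (m : ℕ) (r : ι → ℕ) (z : ι → ℤ) : ℤ :=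
  ∑ i, (m * (z i * (z i - 1)) + 2 * r i * z i)

theorem countRes_eq_card_charges {ι : Type*} [Fintype ι] (m : ℕ) (S : Finset (ZMod m))
    (r : ι → ℕ) (hS : ∀ y, y ∈ S ↔ ∃ i, y = r i ∨ y = -r i) (hr : Injective r) (hpos : ∀ i, 0 < r i)
    (hlt : ∀ i, 2 * r i < m) (n : ℕ) :
    countRes m S n = Nat.card {p : (ι → ℤ) × (ι → Maya.ChargeZero) //
      chargeWeight m r p.1 + 2 * m * ∑ i, Maya.absSum (p.2 i) = 2 * n} := by
  set f := fun p : ι × ℤ => (m * p.2 + r p.1).natAbs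
  have hrange (x : ℕ) : (x : ZMod m) ∈ S ↔ x ∈ Set.range f := by
    simp only [hS, Set.mem_range, Prod.exists, f, exists_natAbs_mul_add_eq_iff]
  have hle (i : ι) : r i ≤ m := by linarith [hlt i]
  have h0 : ((0 : ℕ) : ZMod m) ∉ S := by
    rw [hrange]
    rintro ⟨⟨i, a⟩, h⟩
    exact natAbs_mul_add_ne_zero (hpos i) (by linarith [hlt i]) a h
  rw [countRes, card_distinct_partitions _ h0,
    card_finset_sum_eq_card_pi f (injective_natAbs_mul_add hr hpos hlt) _ hrange]
  refine Nat.card_congr (((Equiv.piCongrRight fun _ => Maya.chargeEquiv).trans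
    (Equiv.arrowProdEquivProdArrow _ _ _)).subtypeEquiv fun F => ?_)
  have hsum : 2 * ((∑ i, ∑ a ∈ F i, f (i, a) : ℕ) : ℤ) = chargeWeight m r
      (Maya.charge ∘ F) + 2 * m * ∑ i, Maya.absSum (Maya.chargeEquiv (F i)).2 := by
    rw [Nat.cast_sum, mul_sum, mul_sum]
    simp only [f, fun i => two_mul_sum_natAbs_mul_add (hle i) (F i), sum_add_distrib,
      chargeWeight, comp_apply]
  rw [← Nat.cast_inj (R := ℤ), ← (mul_right_injective₀ (two_ne_zero' ℤ)).eq_iff, hsum]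
  rfl

def residues11 : Fin 4 → ℕ := ![1, 7, 9, 11]

def residues5 : Fin 4 → ℕ := ![1, 7, 9, 5]

lemma mem_Q11_residues_iff (y : ZMod 24) :
    y ∈ ({1, 7, 9, 11, 13, 15, 17, 23} : Finset (ZMod 24)) ↔
      ∃ i, y = residues11 i ∨ y = -residues11 i := by
  revert y; decide

lemma mem_Q5_residues_iff (y : ZMod 24) :
    y ∈ ({1, 5, 7, 9, 15, 17, 19, 23} : Finset (ZMod 24)) ↔
      ∃ i, y = residues5 i ∨ y = -residues5 i := by
  revert y; decide

/- In the coordinates `t_i = 24 z_i + r_i - 12` (with `residues11` before, `residues5` after)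
this is the orthogonal map
`(t₀, t₁, t₃) ↦ (-2 t₀ + t₁ + 2 t₃, -2 t₀ - 2 t₁ - t₃, -t₀ + 2 t₁ - 2 t₃) / 3` fixing `t₂`.
The division defining `k` is exact only when `z₀ + z₁ + 2 z₃ ≡ 1 (mod 3)`. -/
def latticeMap (z : Fin 4 → ℤ) : Fin 4 → ℤ :=
  let k := (z 0 + z 1 + 2 * z 3 - 1) / 3
  ![z 1 + 2 * z 3 - 2 * k, z 3 - 2 * k, z 2, z 1 - k]

def latticeMapInv (w : Fin 4 → ℤ) : Fin 4 → ℤ :=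
  let k := (w 0 - 2 * w 1 - w 3) / 3
  ![1 - 2 * w 1 - w 3 - 2 * k, w 3 + k, w 2, w 1 + 2 * k]

section Lattice

variable {z w : Fin 4 → ℤ} {g N : ℤ}

lemma emod_three_of_chargeWeight_residues11 (hg : 3 ∣ g) (hN : N % 3 = 1)
    (h : chargeWeight 24 residues11 z + g = 2 * N) : (z 0 + z 1 + 2 * z 3) % 3 = 1 := by
  simp only [chargeWeight, Fin.sum_univ_four, residues11, Matrix.cons_val_zero,
    Matrix.cons_val_one, Matrix.cons_val, Nat.cast_ofNat, Nat.cast_one] at h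
  omega

lemma emod_three_of_chargeWeight_residues5 (hg : 3 ∣ g) (hN : N % 3 = 1)
    (h : chargeWeight 24 residues5 w + g = 2 * (N - 1)) : (w 0 + w 1 + 2 * w 3) % 3 = 0 := by
  simp only [chargeWeight, Fin.sum_univ_four, residues5, Matrix.cons_val_zero,
    Matrix.cons_val_one, Matrix.cons_val, Nat.cast_ofNat, Nat.cast_one] at h
  omega

lemma chargeWeight_latticeMap (hz : (z 0 + z 1 + 2 * z 3) % 3 = 1) :
    chargeWeight 24 residues5 (latticeMap z) = chargeWeight 24 residues11 z - 2 := by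
  obtain ⟨k, hk⟩ : ∃ k, z 0 = 3 * k + 1 - z 1 - 2 * z 3 :=
    ⟨(z 0 + z 1 + 2 * z 3 - 1) / 3, by omega⟩
  have hk' : (z 0 + z 1 + 2 * z 3 - 1) / 3 = k := by omega
  simp only [latticeMap, hk', chargeWeight, Fin.sum_univ_four, residues5, residues11,
    Matrix.cons_val_zero, Matrix.cons_val_one, Matrix.cons_val, Nat.cast_ofNat, Nat.cast_one]
  rw [hk]
  ring

lemma chargeWeight_latticeMapInv (hw : (w 0 + w 1 + 2 * w 3) % 3 = 0) :
    chargeWeight 24 residues11 (latticeMapInv w) = chargeWeight 24 residues5 w + 2 := by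
  obtain ⟨k, hk⟩ : ∃ k, w 0 = 3 * k + 2 * w 1 + w 3 := ⟨(w 0 - 2 * w 1 - w 3) / 3, by omega⟩
  have hk' : (w 0 - 2 * w 1 - w 3) / 3 = k := by omega
  simp only [latticeMapInv, hk', chargeWeight, Fin.sum_univ_four, residues5, residues11,
    Matrix.cons_val_zero, Matrix.cons_val_one, Matrix.cons_val, Nat.cast_ofNat, Nat.cast_one]
  rw [hk]
  ring

lemma latticeMapInv_latticeMap (hz : (z 0 + z 1 + 2 * z 3) % 3 = 1) :
    latticeMapInv (latticeMap z) = z := by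
  funext i
  fin_cases i <;>
    simp only [latticeMapInv, latticeMap, Fin.isValue, Matrix.cons_val_zero, Matrix.cons_val_one,
      Matrix.cons_val, Fin.zero_eta, Fin.mk_one, Fin.reduceFinMk] <;>
    omega

lemma latticeMap_latticeMapInv (hw : (w 0 + w 1 + 2 * w 3) % 3 = 0) :
    latticeMap (latticeMapInv w) = w := by
  funext i
  fin_cases i <;>
    simp only [latticeMapInv, latticeMap, Fin.isValue, Matrix.cons_val_zero, Matrix.cons_val_one,
      Matrix.cons_val, Fin.zero_eta, Fin.mk_one, Fin.reduceFinMk] <;>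
    omega

end Lattice

def latticeEquiv {β : Type*} (g : β → ℤ) (hg : ∀ b, 3 ∣ g b) (N : ℤ) (hN : N % 3 = 1) :
    {p : (Fin 4 → ℤ) × β // chargeWeight 24 residues11 p.1 + g p.2 = 2 * N} ≃
      {p : (Fin 4 → ℤ) × β // chargeWeight 24 residues5 p.1 + g p.2 = 2 * (N - 1)} where
  toFun p := ⟨(latticeMap p.1.1, p.1.2), by
    rw [chargeWeight_latticeMap (emod_three_of_chargeWeight_residues11 (hg _) hN p.2)]
    linarith [p.2]⟩
  invFun p := ⟨(latticeMapInv p.1.1, p.1.2), by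
    rw [chargeWeight_latticeMapInv (emod_three_of_chargeWeight_residues5 (hg _) hN p.2)]
    linarith [p.2]⟩
  left_inv p := by
    ext1
    exact Prod.ext (latticeMapInv_latticeMap (emod_three_of_chargeWeight_residues11 (hg _) hN p.2))
      rfl
  right_inv p := by
    ext1
    exact Prod.ext (latticeMap_latticeMapInv (emod_three_of_chargeWeight_residues5 (hg _) hN p.2))
      rfl

theorem Q5_shift_eq_Q11_of_mod_six_general (n : ℕ) (hmod : n % 6 = 4) :
    Q5 (n - 1) = Q11 n := by
  rw [Q5, Q11,
    countRes_eq_card_charges 24 _ residues5 mem_Q5_residues_iff (by decide) (by decide)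
      (by decide),
    countRes_eq_card_charges 24 _ residues11 mem_Q11_residues_iff (by decide) (by decide)
      (by decide),
    show ((n - 1 : ℕ) : ℤ) = n - 1 by omega]
  refine (Nat.card_congr (latticeEquiv
    (fun u : Fin 4 → Maya.ChargeZero => 2 * ((24 : ℕ) : ℤ) * ∑ i, Maya.absSum (u i))
    (fun _ => ?_) n (by omega))).symm
  exact Dvd.dvd.mul_right (by norm_num) _

/-- Ono's conjecture for `Q`: for every positive `n ≡ 4 (mod 6)`, `Q_5(n-1) = Q_11(n)`. -/
theorem Q5_shift_eq_Q11_of_mod_six (n : ℕ) (hn : 0 < n) (hmod : n % 6 = 4) :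
    Q5 (n - 1) = Q11 n :=
  Q5_shift_eq_Q11_of_mod_six_general n hmod
end

section
/- As formal power series, the coefficient of q^{6n+4} in the product ∏_{m>0, m ≡ ±2, ±6, ±8, ±10 mod 24} (1 − q^m) vanishes for every n ≥ 0. -/
/-!
Splitting off the factors with `24 ∣ m`, the product becomes `∏_{m ≡ 0, ±2 (mod 8)} (1 - qᵐ)`
divided by a power series in `q⁶`, and such a division preserves the vanishing of all coefficients
in a residue class mod 6. By the Jacobi triple product,
`∏_{j ≥ 0} (1 - q^(8j+2)) (1 - q^(8j+6)) (1 - q^(8j+8)) = ∑_{u ∈ 2ℤ} ± q^(u² + u)`,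
and `u² + u` is never `≡ 4 (mod 6)`.

The triple product is used in a finite form: the `q`-binomial theorem for `∏_{i < 2n} (x + y Qⁱ)`
with `Q = q⁸`, `x = q^(8n)`, `y = -q⁶`, multiplied by `(Q; Q)ₙ`, which turns every Gaussian binomial
coefficient in the sum into a polynomial congruent to `1` modulo a high power of `q`.
-/

open Finset PowerSeries

section QBinomial

variable {R : Type*} [CommSemiring R] (q : R)

/-- `qBinom q d e` is the Gaussian binomial coefficient `[d + e choose d]_q`. -/
def qBinom : ℕ → ℕ → R
  | 0, _ => 1
  | _ + 1, 0 => 1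
  | d + 1, e + 1 => qBinom d (e + 1) + q ^ (d + 1) * qBinom (d + 1) e

@[simp]
theorem qBinom_zero_left (e : ℕ) : qBinom q 0 e = 1 := by
  simp [qBinom]

@[simp]
theorem qBinom_zero_right (d : ℕ) : qBinom q d 0 = 1 := by
  cases d <;> simp [qBinom]

theorem qBinom_succ_succ (d e : ℕ) :
    qBinom q (d + 1) (e + 1) = qBinom q d (e + 1) + q ^ (d + 1) * qBinom q (d + 1) e := by
  simp [qBinom]

theorem prod_range_add_mul_pow_eq_sum_qBinom (m : ℕ) (x y : R) :
    ∏ i ∈ range m, (x + y * q ^ i) =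
      ∑ p ∈ antidiagonal m, q ^ p.1.choose 2 * qBinom q p.1 p.2 * y ^ p.1 * x ^ p.2 := by
  induction m generalizing y with
  | zero => simp
  | succ m ih =>
    rw [prod_range_succ', pow_zero, mul_one]
    simp_rw [pow_succ' q, ← mul_assoc, ih, sum_mul, mul_add, sum_add_distrib]
    cases m with
    | zero => simp [Nat.antidiagonal_succ]
    | succ m =>
      rw [Nat.sum_antidiagonal_succ, Nat.sum_antidiagonal_succ', Nat.sum_antidiagonal_succ,
        Nat.sum_antidiagonal_succ', add_add_add_comm, ← sum_add_distrib, ← add_assoc]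
      congr 1
      · simp [Nat.choose_succ_succ', pow_add, mul_pow, mul_comm, mul_assoc, mul_left_comm]
      · refine sum_congr rfl fun p _ => ?_
        simp only [qBinom_succ_succ, Nat.choose_succ_succ', Nat.choose_one_right]
        ring

end QBinomial

section QPochhammer

variable {R : Type*} [CommRing R] (q : R)

theorem prod_range_succ_one_sub_pow_add (a b : ℕ) :
    ∏ j ∈ range (b + 1), (1 - q ^ (a + j + 1)) =
      (1 - q ^ (a + 1)) * ∏ j ∈ range b, (1 - q ^ (a + 1 + j + 1)) := by
  rw [prod_range_succ', mul_comm]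
  simp only [add_assoc, add_comm 1, add_zero]

theorem qBinom_mul_prod_range_right : ∀ d e : ℕ,
    qBinom q d e * ∏ j ∈ range e, (1 - q ^ (j + 1)) = ∏ j ∈ range e, (1 - q ^ (d + j + 1))
  | 0, e => by simp
  | d + 1, 0 => by simp
  | d + 1, e + 1 => by
    have h₁ := qBinom_mul_prod_range_right d (e + 1)
    have h₂ := qBinom_mul_prod_range_right (d + 1) e
    rw [prod_range_succ_one_sub_pow_add, prod_range_succ] at h₁
    rw [qBinom_succ_succ, prod_range_succ, prod_range_succ]
    linear_combination h₁ + q ^ (d + 1) * (1 - q ^ (e + 1)) * h₂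

theorem qBinom_mul_prod_range_left : ∀ d e : ℕ,
    qBinom q d e * ∏ j ∈ range d, (1 - q ^ (j + 1)) = ∏ j ∈ range d, (1 - q ^ (e + j + 1))
  | 0, e => by simp
  | d + 1, 0 => by simp
  | d + 1, e + 1 => by
    have h₁ := qBinom_mul_prod_range_left d (e + 1)
    have h₂ := qBinom_mul_prod_range_left (d + 1) e
    rw [prod_range_succ_one_sub_pow_add, prod_range_succ] at h₂
    rw [qBinom_succ_succ, prod_range_succ, prod_range_succ]
    linear_combination (1 - q ^ (d + 1)) * h₁ + q ^ (d + 1) * h₂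

theorem one_sub_pow_sModEq_one {b k : ℕ} (h : b ≤ k) :
    1 - q ^ k ≡ 1 [SMOD Ideal.span {q ^ b}] := by
  rw [SModEq.sub_mem, sub_sub_cancel_left, Ideal.neg_mem_iff]
  exact Ideal.mem_span_singleton.mpr (pow_dvd_pow q h)

theorem prod_one_sub_pow_sModEq_one {ι : Type*} {s : Finset ι} {f : ι → ℕ} {b : ℕ}
    (h : ∀ i ∈ s, b ≤ f i) : ∏ i ∈ s, (1 - q ^ f i) ≡ 1 [SMOD Ideal.span {q ^ b}] := by
  simpa only [prod_const_one] using
    SModEq.prod (y := fun _ => (1 : R)) fun i hi => one_sub_pow_sModEq_one q (h i hi)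

theorem qBinom_mul_prod_range_sModEq_one {d e n : ℕ} (h : min d e ≤ n) :
    qBinom q d e * ∏ j ∈ range n, (1 - q ^ (j + 1)) ≡ 1
      [SMOD Ideal.span {q ^ (min d e + 1)}] := by
  rcases le_total e d with hed | hde
  · rw [min_eq_right hed] at h ⊢
    rw [← prod_range_mul_prod_Ico _ h, ← mul_assoc, qBinom_mul_prod_range_right]
    simpa only [mul_one] using (prod_one_sub_pow_sModEq_one q fun j _ => by omega).mul
      (prod_one_sub_pow_sModEq_one q fun j hj => by rw [mem_Ico] at hj; omega)
  · rw [min_eq_left hde] at h ⊢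
    rw [← prod_range_mul_prod_Ico _ h, ← mul_assoc, qBinom_mul_prod_range_left]
    simpa only [mul_one] using (prod_one_sub_pow_sModEq_one q fun j _ => by omega).mul
      (prod_one_sub_pow_sModEq_one q fun j hj => by rw [mem_Ico] at hj; omega)

end QPochhammer

section PowerSeries

variable {R : Type*} [CommRing R]

theorem coeff_eq_of_sModEq {φ ψ : R⟦X⟧} {b t : ℕ} (h : φ ≡ ψ [SMOD Ideal.span {X ^ b}])
    (ht : t < b) : coeff t φ = coeff t ψ := by
  rw [SModEq.sub_mem, Ideal.mem_span_singleton, X_pow_dvd_iff] at h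
  exact sub_eq_zero.mp (by simpa using h t ht)

theorem coeff_X_pow_mul_eq_zero_of_sModEq_one {φ : R⟦X⟧} {a b c : ℕ}
    (hφ : φ ≡ 1 [SMOD Ideal.span {X ^ b}]) (hne : a ≠ c) (hlt : c < a + b) :
    coeff c (X ^ a * φ) = 0 := by
  rw [coeff_X_pow_mul']
  split_ifs with hac
  · rw [coeff_eq_of_sModEq hφ (by omega), coeff_one, if_neg (by omega)]
  · rfl

theorem coeff_prod_Icc_ite_of_le (p : ℕ → Prop) [DecidablePred p] {t M : ℕ} (h : t ≤ M) :
    coeff t (∏ m ∈ Icc 1 M, if p m then 1 - X ^ m else 1 : R⟦X⟧) =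
      coeff t (∏ m ∈ Icc 1 t, if p m then 1 - X ^ m else 1 : R⟦X⟧) := by
  induction M, h using Nat.le_induction with
  | base => rfl
  | succ M hM ih =>
    rw [prod_Icc_succ_top (by omega), ← ih]
    refine coeff_eq_of_sModEq (b := t + 1) ?_ (by omega)
    conv_rhs => rw [← mul_one (∏ m ∈ Icc 1 M, _)]
    refine SModEq.rfl.mul ?_
    split_ifs
    · exact one_sub_pow_sModEq_one X (by omega)
    · exact SModEq.rfl

theorem exists_prod_one_sub_X_pow_mul_expand_eq_one {s : Finset ℕ} {k : ℕ} (hk : k ≠ 0)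
    (hs : ∀ m ∈ s, k ∣ m ∧ m ≠ 0) :
    ∃ ψ : R⟦X⟧, (∏ m ∈ s, (1 - X ^ m)) * expand k hk ψ = 1 := by
  have hexpand : expand k hk (∏ m ∈ s, (1 - X ^ (m / k)) : R⟦X⟧) = ∏ m ∈ s, (1 - X ^ m) := by
    rw [map_prod]
    refine prod_congr rfl fun m hm => ?_
    rw [map_sub, map_one, map_pow, expand_X, ← pow_mul, Nat.mul_div_cancel' (hs m hm).1]
  obtain ⟨ψ, hψ⟩ : ∃ ψ, (∏ m ∈ s, (1 - X ^ (m / k)) : R⟦X⟧) * ψ = 1 := by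
    refine IsUnit.exists_right_inv (isUnit_iff_constantCoeff.mpr ?_)
    rw [map_prod, prod_eq_one fun m hm => ?_]
    · exact isUnit_one
    · obtain ⟨hkm, hm0⟩ := hs m hm
      have : m / k ≠ 0 :=
        (Nat.div_pos (Nat.le_of_dvd (Nat.pos_of_ne_zero hm0) hkm) (Nat.pos_of_ne_zero hk)).ne'
      simp [this]
  exact ⟨ψ, by rw [← hexpand, ← map_mul, hψ, map_one]⟩

theorem coeff_eq_zero_of_mul_expand_eq_one {φ ψ χ : R⟦X⟧} {k r N t : ℕ} (hk : k ≠ 0)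
    (hψ : ψ * expand k hk χ = 1) (h : ∀ i ≤ N, i % k = r → coeff i (φ * ψ) = 0)
    (ht : t ≤ N) (htr : t % k = r) : coeff t φ = 0 := by
  rw [← mul_one φ, ← hψ, ← mul_assoc, coeff_mul]
  refine sum_eq_zero fun ⟨i, j⟩ hij => ?_
  rw [HasAntidiagonal.mem_antidiagonal] at hij
  by_cases hj : k ∣ j
  · obtain ⟨l, rfl⟩ := hj
    rw [h i (by omega) (by rw [← htr, ← hij, Nat.add_mul_mod_self_left]), zero_mul]
  · rw [coeff_expand_of_not_dvd k hk χ hj, mul_zero]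

end PowerSeries

theorem sq_add_self_emod_six_ne_four (u : ℤ) : (u ^ 2 + u) % 6 ≠ 4 := by
  have h₀ := Int.emod_nonneg u (by norm_num : (6 : ℤ) ≠ 0)
  have h₁ := Int.emod_lt_of_pos u (by norm_num : (0 : ℤ) < 6)
  rw [pow_two, Int.add_emod, Int.mul_emod]
  interval_cases u % 6 <;> decide

noncomputable def jacobiProd (n : ℕ) : ℤ⟦X⟧ :=
  ∏ j ∈ range n, (1 - X ^ (8 * j + 2)) * (1 - X ^ (8 * j + 6)) * (1 - X ^ (8 * j + 8))

theorem prod_range_X_pow_sub_X_pow (n : ℕ) :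
    ∏ i ∈ range (n + n), (X ^ (8 * n) - X ^ (8 * i + 6) : ℤ⟦X⟧) =
      (-1) ^ n * X ^ (12 * n ^ 2 + 2 * n) *
        ∏ j ∈ range n, (1 - X ^ (8 * j + 2)) * (1 - X ^ (8 * j + 6)) := by
  have hsum : ∑ i ∈ range n, (8 * i + 6) = 4 * n ^ 2 + 2 * n := by
    induction n with
    | zero => rfl
    | succ n ih => rw [sum_range_succ, ih]; ring
  have hlow : ∀ i ∈ range n, (X ^ (8 * n) - X ^ (8 * i + 6) : ℤ⟦X⟧) =
      -X ^ (8 * i + 6) * (1 - X ^ (8 * (n - 1 - i) + 2)) := by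
    intro i hi
    rw [mem_range] at hi
    rw [show 8 * n = 8 * i + 6 + (8 * (n - 1 - i) + 2) by omega]
    ring
  have hhigh : ∀ j, (X ^ (8 * n) - X ^ (8 * (n + j) + 6) : ℤ⟦X⟧) =
      X ^ (8 * n) * (1 - X ^ (8 * j + 6)) := fun j => by ring
  rw [prod_range_add, prod_congr rfl hlow, prod_mul_distrib, prod_neg, card_range,
    prod_pow_eq_pow_sum, hsum, prod_range_reflect (fun j => (1 - X ^ (8 * j + 2) : ℤ⟦X⟧)),
    prod_mul_distrib (s := range n)]
  simp_rw [hhigh, prod_mul_distrib, prod_const, card_range]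
  ring

def jacobiExponent (n d e : ℕ) : ℕ :=
  8 * d.choose 2 + 6 * d + 8 * n * e

theorem neg_one_pow_mul_X_pow_mul_jacobiProd (n : ℕ) :
    (-1) ^ n * X ^ (12 * n ^ 2 + 2 * n) * jacobiProd n =
      ∑ p ∈ antidiagonal (n + n), (-1) ^ p.1 * X ^ jacobiExponent n p.1 p.2 *
        (qBinom (X ^ 8) p.1 p.2 * ∏ j ∈ range n, (1 - (X ^ 8) ^ (j + 1))) := by
  have hfactor : ∀ i, (X ^ (8 * n) - X ^ (8 * i + 6) : ℤ⟦X⟧) =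
      X ^ (8 * n) + -X ^ 6 * (X ^ 8) ^ i := fun i => by ring
  rw [jacobiProd, prod_mul_distrib, ← mul_assoc, ← prod_range_X_pow_sub_X_pow,
    prod_congr rfl fun i _ => hfactor i, prod_range_add_mul_pow_eq_sum_qBinom, sum_mul]
  refine sum_congr rfl fun p _ => ?_
  simp_rw [jacobiExponent, ← pow_mul, mul_add, mul_one]
  ring

theorem cast_jacobiExponent {n d e : ℕ} (h : d + e = n + n) :
    (jacobiExponent n d e : ℤ) = 12 * n ^ 2 + 2 * n + ((d - e : ℤ) ^ 2 + (d - e)) := by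
  have hc : ((d.choose 2 * 2 : ℕ) : ℤ) = d * (d - 1) := by
    rw [Nat.choose_two_right, Nat.div_mul_cancel (Nat.even_mul_pred_self d).two_dvd]
    rcases d with _ | d
    · simp
    · push_cast; ring
  have h' : (d : ℤ) + e = n + n := by exact_mod_cast h
  push_cast [jacobiExponent] at hc ⊢
  linear_combination 4 * hc + (6 * n + 3 * (d + e) - 4 * e + 1) * h'

theorem jacobiExponent_ne {n t d e : ℕ} (h : d + e = n + n) (h6 : t % 6 = 4) :
    jacobiExponent n d e ≠ t + (12 * n ^ 2 + 2 * n) := by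
  intro heq
  have hexp := cast_jacobiExponent h
  rw [heq] at hexp
  push_cast at hexp
  have ht6 : (t : ℤ) % 6 = 4 := by exact_mod_cast h6
  exact sq_add_self_emod_six_ne_four (d - e)
    (by rw [show ((d : ℤ) - e) ^ 2 + (d - e) = t by linarith]; exact ht6)

theorem lt_jacobiExponent_add {n t d e : ℕ} (h : d + e = n + n) (ht : t ≤ n) :
    t + (12 * n ^ 2 + 2 * n) < jacobiExponent n d e + 8 * (min d e + 1) := by
  have hexp := cast_jacobiExponent h
  zify at ht ⊢
  rw [hexp]
  rcases le_total d e with hde | hde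
  · rw [min_eq_left (by exact_mod_cast hde)]
    nlinarith [sq_nonneg ((e : ℤ) - d - 1)]
  · rw [min_eq_right (by exact_mod_cast hde)]
    zify at hde
    nlinarith [sq_nonneg ((d : ℤ) - e)]

theorem coeff_jacobiProd_eq_zero {n t : ℕ} (ht : t ≤ n) (h6 : t % 6 = 4) :
    coeff t (jacobiProd n) = 0 := by
  have key := congrArg (coeff (t + (12 * n ^ 2 + 2 * n))) (neg_one_pow_mul_X_pow_mul_jacobiProd n)
  rw [show ((-1) ^ n : ℤ⟦X⟧) = C ((-1) ^ n) by simp, mul_assoc, coeff_C_mul, coeff_X_pow_mul,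
    map_sum, sum_eq_zero] at key
  · simpa using key
  rintro ⟨d, e⟩ hde
  simp only [HasAntidiagonal.mem_antidiagonal] at hde
  rw [show ((-1) ^ d : ℤ⟦X⟧) = C ((-1) ^ d) by simp, mul_assoc, coeff_C_mul,
    coeff_X_pow_mul_eq_zero_of_sModEq_one (b := 8 * (min d e + 1)) _ (jacobiExponent_ne hde h6)
      (lt_jacobiExponent_add hde ht), mul_zero]
  rw [pow_mul]
  exact qBinom_mul_prod_range_sModEq_one _ (by omega)

theorem prod_Icc_ite_eq_jacobiProd (n : ℕ) :
    ∏ m ∈ Icc 1 (8 * n), (if m % 8 ∈ ({0, 2, 6} : Finset ℕ) then 1 - X ^ m else 1 : ℤ⟦X⟧) =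
      jacobiProd n := by
  induction n with
  | zero => simp [jacobiProd]
  | succ n ih =>
    rw [jacobiProd, prod_range_succ, ← jacobiProd, ← ih, show 8 * (n + 1) = 8 * n + 7 + 1 by ring]
    repeat rw [prod_Icc_succ_top (by omega)]
    simp [Nat.add_mod, mul_comm, mul_assoc, mul_left_comm]

theorem coeff_prod_Icc_ite_eq_zero {N i : ℕ} (hi : i ≤ N) (h6 : i % 6 = 4) :
    coeff i (∏ m ∈ Icc 1 N, if m % 8 ∈ ({0, 2, 6} : Finset ℕ) then 1 - X ^ m else 1 : ℤ⟦X⟧) =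
      0 := by
  rw [coeff_prod_Icc_ite_of_le _ hi, ← coeff_prod_Icc_ite_of_le _ (by omega : i ≤ 8 * i),
    prod_Icc_ite_eq_jacobiProd]
  exact coeff_jacobiProd_eq_zero le_rfl h6

/-- The coefficient of `q^{6n+4}` in `∏_{m>0, m≡±2,±6,±8,±10 (mod 24)} (1−qᵐ)`
vanishes.  (Only factors with `m ≤ 6n+4` contribute to this coefficient.) -/
theorem coeff_vanishes (n : ℕ) :
    (PowerSeries.coeff (R := ℤ) (6 * n + 4))
        (∏ m ∈ Finset.Icc 1 (6 * n + 4),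
          if m % 24 ∈ ({2, 6, 8, 10, 14, 16, 18, 22} : Finset ℕ) then
            (1 - PowerSeries.X ^ m : PowerSeries ℤ) else 1)
      = 0 := by
  obtain ⟨ψ, hψ⟩ := exists_prod_one_sub_X_pow_mul_expand_eq_one (R := ℤ)
    (s := (Icc 1 (6 * n + 4)).filter (24 ∣ ·)) (k := 6) (by norm_num)
    fun m hm => by simp only [mem_filter, mem_Icc] at hm; omega
  rw [prod_filter] at hψ
  have hsplit : ∀ m, ((if m % 24 ∈ ({2, 6, 8, 10, 14, 16, 18, 22} : Finset ℕ) then 1 - X ^ m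
      else 1) * (if 24 ∣ m then 1 - X ^ m else 1) : ℤ⟦X⟧) =
        if m % 8 ∈ ({0, 2, 6} : Finset ℕ) then 1 - X ^ m else 1 := by
    intro m
    simp only [mem_insert, mem_singleton]
    split_ifs <;> first | omega | ring
  refine coeff_eq_zero_of_mul_expand_eq_one (r := 4) _ hψ (fun i hi h6 => ?_) le_rfl (by omega)
  rw [← prod_mul_distrib, prod_congr rfl fun m _ => hsplit m]
  exact coeff_prod_Icc_ite_eq_zero hi h6
end
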